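/- arXiv:1804.07424 — 4 statements merged into one kernel-verified Lean document; each statement's English description precedes it below -/
import Mathlib

section
/- Let W = ⊕_{n∈ℂ} W_{[n]} be a ℂ-graded complex vector space with graded dual W' = ⊕_{n∈ℂ} W_{[n]}* and algebraic completion \overline{W} = ∏_{n∈ℂ} W_{[n]}, and let f : F_nℂ → (W')* be a map satisfying: (i) for every w' ∈ W', (z_1,…,z_n) ↦ ⟨w', f(z_1,…,z_n)⟩ is a rational function with the only possible poles at z_i = z_j (i ≠ j); (ii) there exist integers p_{ij} (1 ≤ i < j ≤ n) and a formal series g ∈ W[[x_1,…,x_n]] such that ∏_{i<j}(z_i−z_j)^{p_{ij}}⟨w', f(z_1,…,z_n)⟩ = ⟨w', g(z_1,…,z_n)⟩ as polynomial functions, for every w' ∈ W' and every (z_1,…,z_n) ∈ F_nℂ. If in addition there exists a complex number C such that every coefficient b_{i_1…i_n} of x_1^{i_1}⋯x_n^{i_n} in g is a homogeneous element of W with wt b_{i_1…i_n} − i_1 − ⋯ − i_n = C, then f takes values in \overline{W} (viewed inside (W')*). -/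
set_option autoImplicit false
set_option maxHeartbeats 1000000

open scoped BigOperators

noncomputable section

namespace VA

/-- Absolute convergence of a series of complex numbers indexed by `ι` to the sum `s`. -/
def AbsConvTo {ι : Type*} (f : ι → ℂ) (s : ℂ) : Prop :=
  Summable (fun i => ‖f i‖) ∧ HasSum f s

/-- The configuration-space condition: the entries of `z` are pairwise distinct. -/
def Conf {ι : Type*} (z : ι → ℂ) : Prop := ∀ i j : ι, i ≠ j → z i ≠ z j

/-- `‖z 0‖ > ‖z 1‖ > ⋯ > ‖z (n-1)‖`. -/
def Ordered {n : ℕ} (z : Fin n → ℂ) : Prop := ∀ i j : Fin n, i < j → ‖z j‖ < ‖z i‖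

/-- `‖z 0‖ > ‖z 1‖ > ⋯ > ‖z (n-1)‖ > 0`. -/
def OrderedPos {n : ℕ} (z : Fin n → ℂ) : Prop := Ordered z ∧ ∀ i, 0 < ‖z i‖

/-- A rational function in the variables `z i`, `i : ι`, whose only possible poles are
at `z i = 0` and on the diagonals `z i = z j` (`i ≠ j`); it is recorded as a numerator
polynomial together with the orders of the poles. -/
structure RatFn (ι : Type*) [Fintype ι] [DecidableEq ι] where
  num : MvPolynomial ι ℂ
  a : ι → ℕ
  b : ι → ι → ℕ

def RatFn.eval {ι : Type*} [Fintype ι] [DecidableEq ι] (R : RatFn ι) (z : ι → ℂ) : ℂ :=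
  MvPolynomial.eval z R.num /
    ((∏ i, z i ^ R.a i) * ∏ q ∈ Finset.univ.offDiag, (z q.1 - z q.2) ^ R.b q.1 q.2)

/-- A rational function in the variables `z i`, `i : ι`, whose only possible poles are
on the diagonals `z i = z j` (`i ≠ j`). -/
structure DiagRatFn (ι : Type*) [Fintype ι] [DecidableEq ι] where
  num : MvPolynomial ι ℂ
  b : ι → ι → ℕ

def DiagRatFn.eval {ι : Type*} [Fintype ι] [DecidableEq ι] (R : DiagRatFn ι) (z : ι → ℂ) : ℂ :=
  MvPolynomial.eval z R.num / ∏ q ∈ Finset.univ.offDiag, (z q.1 - z q.2) ^ R.b q.1 q.2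

/-- A linear functional belongs to the graded dual iff its restriction to all but
finitely many homogeneous components vanishes. -/
def InGradedDual {ι : Type*} {M : Type*} [AddCommGroup M] [Module ℂ M]
    (proj : ι → M →ₗ[ℂ] M) (φ : M →ₗ[ℂ] ℂ) : Prop :=
  (Function.support fun i => φ ∘ₗ proj i).Finite

/-- Iterated application: `compApply n f w = f 0 (f 1 (⋯ (f (n-1) w)))`. -/
def compApply {M : Type*} : (n : ℕ) → (Fin n → (M → M)) → M → M
  | 0, _, w => w
  | n+1, f, w => f 0 (compApply n (fun i => f i.succ) w)

section Graded

variable (W : Type*) [AddCommGroup W] [Module ℂ W]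

/-- A `ℂ`-grading of `W`, recorded via the projections onto the homogeneous
subspaces, whose weights have lower-bounded real parts. -/
structure CGrading where
  proj : ℂ → W →ₗ[ℂ] W
  proj_comp : ∀ m n : ℂ, proj m ∘ₗ proj n = if m = n then proj n else 0
  proj_finite : ∀ w : W, (Function.support fun n => proj n w).Finite
  proj_sum : ∀ w : W, (∑ᶠ n : ℂ, proj n w) = w
  lower_bound : ∃ B : ℝ, ∀ n : ℂ, n.re < B → proj n = 0

/-- A `ℤ`-grading of `V` with lower-bounded weights. -/
structure ZGrading where
  proj : ℤ → W →ₗ[ℂ] W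
  proj_comp : ∀ m n : ℤ, proj m ∘ₗ proj n = if m = n then proj n else 0
  proj_finite : ∀ w : W, (Function.support fun n => proj n w).Finite
  proj_sum : ∀ w : W, (∑ᶠ n : ℤ, proj n w) = w
  lower_bound : ∃ B : ℤ, ∀ n : ℤ, n < B → proj n = 0

variable {W}

/-- The grading operator `d` of a `ℂ`-graded space. -/
def CGrading.d (G : CGrading W) (w : W) : W := ∑ᶠ n : ℂ, n • G.proj n w

/-- The grading operator `d` of a `ℤ`-graded space. -/
def ZGrading.d (G : ZGrading W) (v : W) : W := ∑ᶠ n : ℤ, (n : ℂ) • G.proj n v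

/-- The operator `z^d` on a `ℤ`-graded space. -/
def ZGrading.zd (G : ZGrading W) (z : ℂ) (v : W) : W := ∑ᶠ n : ℤ, (z ^ n) • G.proj n v

/-- The algebraic completion `∏ₙ W_[n]`, realized as the submodule of functions
`ℂ → W` recording a homogeneous component in each weight. -/
def CGrading.compSub (G : CGrading W) : Submodule ℂ (ℂ → W) where
  carrier := {f | ∀ n, G.proj n (f n) = f n}
  add_mem' := by
    intro a b ha hb n
    simp only [Pi.add_apply, map_add, ha n, hb n]
  zero_mem' := by
    intro n
    simp
  smul_mem' := by
    intro c f hf n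
    simp only [Pi.smul_apply, map_smul, hf n]

/-- The algebraic completion of a graded space. -/
abbrev CGrading.Comp (G : CGrading W) : Type _ := ↥G.compSub

/-- The pairing between the graded dual and the algebraic completion. -/
def CGrading.pair (G : CGrading W) (φ : W →ₗ[ℂ] ℂ) (f : G.Comp) : ℂ :=
  ∑ᶠ n : ℂ, φ (f.1 n)

/-- The embedding of `W` into its algebraic completion. -/
def CGrading.emb (G : CGrading W) (w : W) : G.Comp :=
  ⟨fun n => G.proj n w, by
    intro n
    have h := congrArg (fun T : W →ₗ[ℂ] W => T w) (G.proj_comp n n)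
    simpa using h⟩

/-- The componentwise extension of an operator on `W` to the algebraic completion. -/
def CGrading.ext (G : CGrading W) (L : W → W) (f : G.Comp) : G.Comp :=
  ⟨fun m => ∑ᶠ n : ℂ, G.proj m (L (f.1 n)), by
    intro m
    show G.proj m (∑ᶠ n : ℂ, G.proj m (L (f.1 n))) = ∑ᶠ n : ℂ, G.proj m (L (f.1 n))
    by_cases h : (Function.support fun n => G.proj m (L (f.1 n))).Finite
    · have h1 := AddMonoidHom.map_finsum (G.proj m).toAddMonoidHom h
      simp only [LinearMap.toAddMonoidHom_coe] at h1
      rw [h1]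
      refine finsum_congr fun n => ?_
      have h2 := congrArg (fun T : W →ₗ[ℂ] W => T (L (f.1 n))) (G.proj_comp m m)
      simpa using h2
    · rw [finsum_of_infinite_support h]
      simp⟩

/-- The operator `z^d` on the algebraic completion, acting on the component of
weight `n` by `z ^ n` (complex power). -/
def CGrading.zd (G : CGrading W) (z : ℂ) (f : G.Comp) : G.Comp :=
  ⟨fun n => (z ^ n) • f.1 n, by
    intro n
    rw [map_smul, f.2 n]⟩

end Graded


section VOA

/-- A meromorphic open-string vertex algebra (MOSVA): a lower-bounded `ℤ`-graded
space with a vertex operator map (recorded through its coefficients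
`Y u v k = (Y_V)_k(u)v`, the coefficient of `x^{-k-1}` in `Y_V(u,x)v`) and a
vacuum, satisfying the grading, vacuum, `D`-derivative/commutator, rationality and
associativity axioms. -/
structure MOSVA (V : Type*) [AddCommGroup V] [Module ℂ V] where
  gr : ZGrading V
  Y : V →ₗ[ℂ] V →ₗ[ℂ] (ℤ → V)
  vac : V
  /-- lower truncation of vertex operators -/
  trunc : ∀ u v : V, ∃ N : ℤ, ∀ k : ℤ, N ≤ k → Y u v k = 0
  /-- identity property `Y(𝟏,x) = 1` -/
  identity : ∀ (v : V) (k : ℤ), Y vac v k = if k = -1 then v else 0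
  /-- creation property: `Y(u,x)𝟏 ∈ V[[x]]` and `lim_{x→0} Y(u,x)𝟏 = u` -/
  creation : ∀ (u : V) (k : ℤ), 0 ≤ k → Y u vac k = 0
  creation_lim : ∀ u : V, Y u vac (-1) = u
  /-- the `d`-commutator formula, written in terms of coefficients -/
  d_comm : ∀ (u v : V) (k : ℤ),
    gr.d (Y u v k) = Y (gr.d u) v k + (-(k : ℂ) - 1) • Y u v k + Y u (gr.d v) k
  /-- the `D`-derivative property (`D_V u = (Y_V)_{-2}(u)𝟏`) -/
  D_deriv : ∀ (u v : V) (k : ℤ),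
    Y (Y u vac (-2)) v k = (-(k : ℂ)) • Y u v (k - 1)
  /-- the `D`-commutator formula -/
  D_comm : ∀ (u v : V) (k : ℤ),
    Y (Y u v k) vac (-2) - Y u (Y v vac (-2)) k = (-(k : ℂ)) • Y u v (k - 1)
  /-- rationality of products: matrix coefficients of products of vertex operators
  converge absolutely in the ordered region to rational functions with the only
  possible poles at `z i = 0` and `z i = z j` -/
  rationality : ∀ (n : ℕ) (u : Fin n → V) (v : V) (φ : V →ₗ[ℂ] ℂ),
    InGradedDual gr.proj φ → ∃ R : RatFn (Fin n), ∀ z : Fin n → ℂ, OrderedPos z →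
      AbsConvTo (fun k : Fin n → ℤ =>
          φ (compApply n (fun i x => Y (u i) x (k i)) v) * ∏ i, z i ^ (-(k i) - 1))
        (R.eval z)
  /-- rationality of iterates and associativity: products and iterates converge to a
  common rational function -/
  associativity : ∀ (u₁ u₂ v : V) (φ : V →ₗ[ℂ] ℂ), InGradedDual gr.proj φ →
    ∃ R : RatFn (Fin 2),
      (∀ z₁ z₂ : ℂ, ‖z₂‖ < ‖z₁‖ → 0 < ‖z₂‖ →
        AbsConvTo (fun k : ℤ × ℤ =>
            φ (Y u₁ (Y u₂ v k.2) k.1) * z₁ ^ (-k.1 - 1) * z₂ ^ (-k.2 - 1))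
          (R.eval ![z₁, z₂])) ∧
      (∀ z₁ z₂ : ℂ, ‖z₁ - z₂‖ < ‖z₂‖ → 0 < ‖z₁ - z₂‖ →
        AbsConvTo (fun k : ℤ × ℤ =>
            φ (Y (Y u₁ u₂ k.1) v k.2) * (z₁ - z₂) ^ (-k.1 - 1) * z₂ ^ (-k.2 - 1))
          (R.eval ![z₁, z₂]))

variable {V : Type*} [AddCommGroup V] [Module ℂ V]

/-- The operator `D_V`. -/
def MOSVA.D (A : MOSVA V) (v : V) : V := A.Y v A.vac (-2)

/-- The pole-order condition for a MOSVA. -/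
def MOSVA.PoleOrder (A : MOSVA V) : Prop :=
  ∀ u₁ v : V, ∃ C : ℕ, ∀ φ : V →ₗ[ℂ] ℂ, InGradedDual A.gr.proj φ → ∀ u₂ : V,
    ∃ R : RatFn (Fin 2), R.a 0 ≤ C ∧
      ∀ z₁ z₂ : ℂ, ‖z₂‖ < ‖z₁‖ → 0 < ‖z₂‖ →
        AbsConvTo (fun k : ℤ × ℤ =>
            φ (A.Y u₁ (A.Y u₂ v k.2) k.1) * z₁ ^ (-k.1 - 1) * z₂ ^ (-k.2 - 1))
          (R.eval ![z₁, z₂])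

/-- A bimodule for a MOSVA: a `ℂ`-graded space with left and right vertex operator
maps (recorded through their coefficients), satisfying the left module, right module
and compatibility axioms. -/
structure Bimod (A : MOSVA V) (W : Type*) [AddCommGroup W] [Module ℂ W] where
  gr : CGrading W
  YL : V →ₗ[ℂ] W →ₗ[ℂ] (ℤ → W)
  YR : W →ₗ[ℂ] V →ₗ[ℂ] (ℤ → W)
  DW : W →ₗ[ℂ] W
  /-- `D_W` has weight one -/
  DW_wt : ∀ n : ℂ, DW ∘ₗ gr.proj n = gr.proj (n + 1) ∘ₗ DW ∘ₗ gr.proj n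
  truncL : ∀ (u : V) (w : W), ∃ N : ℤ, ∀ k : ℤ, N ≤ k → YL u w k = 0
  truncR : ∀ (w : W) (u : V), ∃ N : ℤ, ∀ k : ℤ, N ≤ k → YR w u k = 0
  identityL : ∀ (w : W) (k : ℤ), YL A.vac w k = if k = -1 then w else 0
  creationR : ∀ (w : W) (k : ℤ), 0 ≤ k → YR w A.vac k = 0
  creationR_lim : ∀ w : W, YR w A.vac (-1) = w
  d_commL : ∀ (u : V) (w : W) (k : ℤ),
    gr.d (YL u w k) = YL (A.gr.d u) w k + (-(k : ℂ) - 1) • YL u w k + YL u (gr.d w) k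
  d_commR : ∀ (w : W) (u : V) (k : ℤ),
    gr.d (YR w u k) = YR (gr.d w) u k + (-(k : ℂ) - 1) • YR w u k + YR w (A.gr.d u) k
  D_derivL : ∀ (u : V) (w : W) (k : ℤ),
    YL (A.D u) w k = (-(k : ℂ)) • YL u w (k - 1)
  D_commL : ∀ (u : V) (w : W) (k : ℤ),
    DW (YL u w k) - YL u (DW w) k = (-(k : ℂ)) • YL u w (k - 1)
  D_derivR : ∀ (w : W) (u : V) (k : ℤ),
    YR (DW w) u k = (-(k : ℂ)) • YR w u (k - 1)
  D_commR : ∀ (w : W) (u : V) (k : ℤ),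
    DW (YR w u k) - YR w (A.D u) k = (-(k : ℂ)) • YR w u (k - 1)
  /-- rationality for products of left vertex operators -/
  rationalityL : ∀ (n : ℕ) (u : Fin n → V) (w : W) (φ : W →ₗ[ℂ] ℂ),
    InGradedDual gr.proj φ → ∃ R : RatFn (Fin n), ∀ z : Fin n → ℂ, OrderedPos z →
      AbsConvTo (fun k : Fin n → ℤ =>
          φ (compApply n (fun i x => YL (u i) x (k i)) w) * ∏ i, z i ^ (-(k i) - 1))
        (R.eval z)
  /-- rationality of iterates and associativity for the left vertex operator map -/
  associativityL : ∀ (u₁ u₂ : V) (w : W) (φ : W →ₗ[ℂ] ℂ), InGradedDual gr.proj φ →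
    ∃ R : RatFn (Fin 2),
      (∀ z₁ z₂ : ℂ, ‖z₂‖ < ‖z₁‖ → 0 < ‖z₂‖ →
        AbsConvTo (fun k : ℤ × ℤ =>
            φ (YL u₁ (YL u₂ w k.2) k.1) * z₁ ^ (-k.1 - 1) * z₂ ^ (-k.2 - 1))
          (R.eval ![z₁, z₂])) ∧
      (∀ z₁ z₂ : ℂ, ‖z₁ - z₂‖ < ‖z₂‖ → 0 < ‖z₁ - z₂‖ →
        AbsConvTo (fun k : ℤ × ℤ =>
            φ (YL (A.Y u₁ u₂ k.1) w k.2) * (z₁ - z₂) ^ (-k.1 - 1) * z₂ ^ (-k.2 - 1))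
          (R.eval ![z₁, z₂]))
  /-- rationality for products `Y_W^R(w,z₁)Y_V(u₁,z₂)⋯Y_V(u_{n-1},z_n)u_n` -/
  rationalityR : ∀ (n : ℕ) (w : W) (v : Fin (n+1) → V) (φ : W →ₗ[ℂ] ℂ),
    InGradedDual gr.proj φ → ∃ R : RatFn (Fin (n+1)),
      ∀ z : Fin (n+1) → ℂ, OrderedPos z →
        AbsConvTo (fun k : Fin (n+1) → ℤ =>
            φ (YR w (compApply n (fun i x => A.Y (v i.castSucc) x (k i.succ))
                (v (Fin.last n))) (k 0)) * ∏ i, z i ^ (-(k i) - 1))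
          (R.eval z)
  /-- rationality of iterates and associativity for the right vertex operator map -/
  associativityR : ∀ (w : W) (u₁ u₂ : V) (φ : W →ₗ[ℂ] ℂ), InGradedDual gr.proj φ →
    ∃ R : RatFn (Fin 2),
      (∀ z₁ z₂ : ℂ, ‖z₂‖ < ‖z₁‖ → 0 < ‖z₂‖ →
        AbsConvTo (fun k : ℤ × ℤ =>
            φ (YR w (A.Y u₁ u₂ k.2) k.1) * z₁ ^ (-k.1 - 1) * z₂ ^ (-k.2 - 1))
          (R.eval ![z₁, z₂])) ∧
      (∀ z₁ z₂ : ℂ, ‖z₁ - z₂‖ < ‖z₂‖ → 0 < ‖z₁ - z₂‖ →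
        AbsConvTo (fun k : ℤ × ℤ =>
            φ (YR (YR w u₁ k.1) u₂ k.2) * (z₁ - z₂) ^ (-k.1 - 1) * z₂ ^ (-k.2 - 1))
          (R.eval ![z₁, z₂]))
  /-- compatibility: rationality of mixed products
  `Y_W^L(u₁,z₁)⋯Y_W^L(u_p,z_p)Y_W^R(w,z₀)Y_V(v₁,⋅)⋯Y_V(v_{q},⋅)v_{q+1}` -/
  compatRat : ∀ (p q : ℕ) (u : Fin p → V) (w : W) (v : Fin (q+1) → V)
      (φ : W →ₗ[ℂ] ℂ), InGradedDual gr.proj φ →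
    ∃ R : RatFn (Fin p ⊕ Fin (q+1)),
      ∀ (zL : Fin p → ℂ) (z0 : ℂ) (zR : Fin q → ℂ),
        Ordered zL → (∀ i, ‖z0‖ < ‖zL i‖) → (∀ j, ‖zR j‖ < ‖z0‖) → Ordered zR →
        0 < ‖z0‖ → (∀ j, 0 < ‖zR j‖) →
        AbsConvTo (fun K : (Fin p → ℤ) × ℤ × (Fin q → ℤ) =>
            φ (compApply p (fun i x => YL (u i) x (K.1 i))
                (YR w (compApply q (fun j x => A.Y (v j.castSucc) x (K.2.2 j))
                  (v (Fin.last q))) K.2.1))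
              * (∏ i, zL i ^ (-(K.1 i) - 1)) * z0 ^ (-K.2.1 - 1)
              * ∏ j, zR j ^ (-(K.2.2 j) - 1))
          (R.eval (Sum.elim zL (Fin.cons z0 zR)))
  /-- compatibility: associativity for the left and right vertex operator maps -/
  compatAssoc : ∀ (u v : V) (w : W) (φ : W →ₗ[ℂ] ℂ), InGradedDual gr.proj φ →
    ∃ R : RatFn (Fin 2),
      (∀ z₁ z₂ : ℂ, ‖z₂‖ < ‖z₁‖ → 0 < ‖z₂‖ →
        AbsConvTo (fun k : ℤ × ℤ =>
            φ (YL u (YR w v k.2) k.1) * z₁ ^ (-k.1 - 1) * z₂ ^ (-k.2 - 1))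
          (R.eval ![z₁, z₂])) ∧
      (∀ z₁ z₂ : ℂ, ‖z₁ - z₂‖ < ‖z₂‖ → 0 < ‖z₁ - z₂‖ →
        AbsConvTo (fun k : ℤ × ℤ =>
            φ (YR (YL u w k.1) v k.2) * (z₁ - z₂) ^ (-k.1 - 1) * z₂ ^ (-k.2 - 1))
          (R.eval ![z₁, z₂]))

variable {W : Type*} [AddCommGroup W] [Module ℂ W] {A : MOSVA V}

/-- The opposite right vertex operator map
`Y_W^{s(R)}(v,x)w = e^{xD_W}Y_W^R(w,-x)v`, through its coefficients. -/
def Bimod.YsR (B : Bimod A W) (v : V) (w : W) (k : ℤ) : W :=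
  ∑ᶠ m : ℕ, (((-1 : ℂ) ^ (k + (m : ℤ) + 1)) * ((m.factorial : ℂ))⁻¹) •
    ((B.DW ^ m) (B.YR w v (k + (m : ℤ))))

/-- The pole-order condition for a bimodule over a MOSVA. -/
def Bimod.PoleOrder (B : Bimod A W) : Prop :=
  (∀ (u₁ : V) (w : W), ∃ C : ℕ, ∀ φ : W →ₗ[ℂ] ℂ, InGradedDual B.gr.proj φ → ∀ u₂ : V,
    ∃ R : RatFn (Fin 2), R.a 0 ≤ C ∧
      ∀ z₁ z₂ : ℂ, ‖z₂‖ < ‖z₁‖ → 0 < ‖z₂‖ →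
        AbsConvTo (fun k : ℤ × ℤ =>
            φ (B.YL u₁ (B.YL u₂ w k.2) k.1) * z₁ ^ (-k.1 - 1) * z₂ ^ (-k.2 - 1))
          (R.eval ![z₁, z₂])) ∧
  (∀ (u₂ : V) (w : W), ∃ C : ℕ, ∀ φ : W →ₗ[ℂ] ℂ, InGradedDual B.gr.proj φ → ∀ u₁ : V,
    ∃ R : RatFn (Fin 2), R.a 0 ≤ C ∧
      ∀ z₁ z₂ : ℂ, ‖z₂‖ < ‖z₁‖ → 0 < ‖z₂‖ →
        AbsConvTo (fun k : ℤ × ℤ =>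
            φ (B.YR w (A.Y u₁ u₂ k.2) k.1) * z₁ ^ (-k.1 - 1) * z₂ ^ (-k.2 - 1))
          (R.eval ![z₁, z₂])) ∧
  (∀ (u₁ u₂ : V), ∃ C : ℕ, ∀ φ : W →ₗ[ℂ] ℂ, InGradedDual B.gr.proj φ → ∀ w : W,
    ∃ R : RatFn (Fin 2), R.a 0 ≤ C ∧
      ∀ z₁ z₂ : ℂ, ‖z₂‖ < ‖z₁‖ → 0 < ‖z₂‖ →
        AbsConvTo (fun k : ℤ × ℤ =>
            φ (B.YL u₁ (B.YR w u₂ k.2) k.1) * z₁ ^ (-k.1 - 1) * z₂ ^ (-k.2 - 1))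
          (R.eval ![z₁, z₂]))

end VOA


section Cochains

variable {V : Type*} [AddCommGroup V] [Module ℂ V]
variable {W : Type*} [AddCommGroup W] [Module ℂ W] {A : MOSVA V}

/-- A `W̄`-valued rational function in the variables `z i`, `i : ι`, with the only
possible poles at `z i = z j`: a map from configuration space to the algebraic
completion whose pairings with graded-dual functionals are such rational functions,
with pole orders uniform in the functional, as witnessed by a formal power series
with coefficients in `W` (condition (ii)). -/
def CGrading.WTilde (G : CGrading W) {ι : Type*} [Fintype ι] [DecidableEq ι]
    (f : (ι → ℂ) → G.Comp) : Prop :=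
  (∀ φ : W →ₗ[ℂ] ℂ, InGradedDual G.proj φ →
      ∃ R : DiagRatFn ι, ∀ z : ι → ℂ, Conf z → G.pair φ (f z) = R.eval z) ∧
  ∃ (p : ι → ι → ℤ) (b : (ι → ℕ) → W),
    ∀ φ : W →ₗ[ℂ] ℂ, InGradedDual G.proj φ →
      (Function.support fun k => φ (b k)).Finite ∧
      ∀ z : ι → ℂ, Conf z →
        (∏ q ∈ Finset.univ.offDiag, (z q.1 - z q.2) ^ (p q.1 q.2)) * G.pair φ (f z)
          = ∑ᶠ k : ι → ℕ, φ (b k) * ∏ i, z i ^ (k i)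

/-- The pattern of left/right vertex operators: the `i`-th operator is
`Y_W^L(u i, z i)` if `isL i`, and `Y_W^{s(R)}(u i, z i)` otherwise; `k` records the
coefficient extracted from each operator. -/
def patOps (B : Bimod A W) {n : ℕ} (isL : Fin n → Bool) (u : Fin n → V)
    (k : Fin n → ℤ) : Fin n → (W → W) :=
  fun i => if isL i then fun x => B.YL (u i) x (k i) else fun x => B.YsR (u i) x (k i)

/-- The pattern with `l` left operators followed by `n - l` opposite right operators. -/
def prefixPat (n l : ℕ) : Fin n → Bool := fun i => decide ((i : ℕ) < l)

/-- A vector `w` such that `Y_W^L(u,x)w ∈ W[[x]]` and `Y_W^{s(R)}(u,x)w ∈ W[[x]]`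
for every `u ∈ V`. -/
def Bimod.RegVec (B : Bimod A W) (w : W) : Prop :=
  ∀ (u : V) (k : ℤ), 0 ≤ k → B.YL u w k = 0 ∧ B.YsR u w k = 0

/-- `f` represents the `W̄`-valued rational function
`E(Y^{L/sR}(u 0, z 0)⋯Y^{L/sR}(u (n-1), z (n-1)) w)` (with the operators prescribed
by the pattern `isL`): `f` is a `W̄`-valued rational function with only diagonal
poles whose pairings are the sums of the corresponding series of matrix coefficients
on the region `|z 0| > ⋯ > |z (n-1)| > 0`. -/
def RepEPat (B : Bimod A W) {n : ℕ} (isL : Fin n → Bool) (u : Fin n → V) (w : W)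
    (f : (Fin n → ℂ) → B.gr.Comp) : Prop :=
  B.gr.WTilde f ∧
  ∀ φ : W →ₗ[ℂ] ℂ, InGradedDual B.gr.proj φ → ∀ z : Fin n → ℂ, OrderedPos z →
    AbsConvTo (fun k : Fin n → ℤ =>
        φ (compApply n (patOps B isL u k) w) * ∏ i, z i ^ (-(k i) - 1))
      (B.gr.pair φ (f z))

/-- `f` represents the `W̄`-valued rational function given by a product of groups of
vertex operators, with group `i` of size `α i` and left/right pattern `isL`;
the variables are indexed by the sigma type `(i : Fin N) × Fin (α i)`. -/
def RepESig (B : Bimod A W) {N : ℕ} (α : Fin N → ℕ)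
    (isL : (i : Fin N) → Fin (α i) → Bool)
    (u : (i : Fin N) → Fin (α i) → V) (w : W)
    (f : (((i : Fin N) × Fin (α i)) → ℂ) → B.gr.Comp) : Prop :=
  B.gr.WTilde f ∧
  ∀ φ : W →ₗ[ℂ] ℂ, InGradedDual B.gr.proj φ →
    ∀ Z : (i : Fin N) → Fin (α i) → ℂ,
      (∀ (i : Fin N) (s t : Fin (α i)), s < t → ‖Z i t‖ < ‖Z i s‖) →
      (∀ (i j : Fin N), i < j → ∀ (s : Fin (α i)) (t : Fin (α j)), ‖Z j t‖ < ‖Z i s‖) →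
      (∀ (i : Fin N) (s : Fin (α i)), 0 < ‖Z i s‖) →
      AbsConvTo (fun K : (i : Fin N) → Fin (α i) → ℤ =>
          φ (compApply N (fun i x => compApply (α i) (fun s y =>
              if isL i s then B.YL (u i s) y (K i s) else B.YsR (u i s) y (K i s)) x) w)
            * ∏ i, ∏ s, Z i s ^ (-(K i s) - 1))
        (B.gr.pair φ (f (fun q => Z q.1 q.2)))

/-- Multilinearity of a map on `n`-tuples of vectors. -/
def IsMultilinear {M : Type*} [AddCommMonoid M] [Module ℂ M] {n : ℕ}
    (Φ : (Fin n → V) → M) : Prop :=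
  (∀ (v : Fin n → V) (i : Fin n) (x y : V),
      Φ (Function.update v i (x + y)) = Φ (Function.update v i x) + Φ (Function.update v i y)) ∧
  ∀ (v : Fin n → V) (i : Fin n) (c : ℂ) (x : V),
      Φ (Function.update v i (c • x)) = c • Φ (Function.update v i x)

/-- The `D`-derivative property of a map `Φ : V^{⊗n} → W̃_{z₁,…,zₙ}`. -/
def DDerivProp (A : MOSVA V) (B : Bimod A W) {n : ℕ}
    (Φ : (Fin n → V) → (Fin n → ℂ) → B.gr.Comp) : Prop :=
  (∀ (v : Fin n → V) (i : Fin n) (φ : W →ₗ[ℂ] ℂ), InGradedDual B.gr.proj φ →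
    ∀ z : Fin n → ℂ, Conf z →
      HasDerivAt (fun t : ℂ => B.gr.pair φ (Φ v (Function.update z i t)))
        (B.gr.pair φ (Φ (Function.update v i (A.D (v i))) z)) (z i)) ∧
  (∀ (v : Fin n → V) (φ : W →ₗ[ℂ] ℂ), InGradedDual B.gr.proj φ →
    ∀ z : Fin n → ℂ, Conf z →
      B.gr.pair φ (B.gr.ext (⇑B.DW) (Φ v z)) =
        ∑ i, B.gr.pair φ (Φ (Function.update v i (A.D (v i))) z))

/-- The `d`-conjugation property of a map `Φ : V^{⊗n} → W̃_{z₁,…,zₙ}`. -/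
def DConjProp (A : MOSVA V) (B : Bimod A W) {n : ℕ}
    (Φ : (Fin n → V) → (Fin n → ℂ) → B.gr.Comp) : Prop :=
  ∀ (v : Fin n → V) (φ : W →ₗ[ℂ] ℂ), InGradedDual B.gr.proj φ →
    ∀ (z : Fin n → ℂ) (c : ℂ), c ≠ 0 → Conf z → Conf (fun i => c * z i) →
      B.gr.pair φ (B.gr.zd c (Φ v z)) =
        B.gr.pair φ (Φ (fun i => A.gr.zd c (v i)) (fun i => c * z i))

/-- Composability of `Φ : V^{⊗n} → W̃` with `m` vertex operators. -/
def ComposableWith (A : MOSVA V) (B : Bimod A W) (n m : ℕ)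
    (Φ : (Fin n → V) → (Fin n → ℂ) → B.gr.Comp) : Prop :=
  ∃ Cb : V → V → ℕ,
  ∀ (α : Fin (n+1) → ℕ), (∑ i, α i) = m + n →
  ∀ l₀ : ℕ, l₀ ≤ α 0 →
  ∀ u : (i : Fin (n+1)) → Fin (α i) → V,
  ∀ φ : W →ₗ[ℂ] ℂ, InGradedDual B.gr.proj φ →
  ∃ R : DiagRatFn ((i : Fin (n+1)) × Fin (α i)),
    (∀ q q' : (i : Fin (n+1)) × Fin (α i), R.b q q' ≤ Cb (u q.1 q.2) (u q'.1 q'.2)) ∧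
    ∀ (z : (i : Fin (n+1)) → Fin (α i) → ℂ) (ζ : Fin n → ℂ),
      (∀ s t : Fin (α 0), s < t → ‖z 0 t‖ < ‖z 0 s‖) →
      (∀ (j : Fin (α 0)) (i : Fin n) (t : Fin (α i.succ)),
          ‖ζ i‖ + ‖z i.succ t - ζ i‖ < ‖z 0 j‖) →
      (∀ (i : Fin n) (s t : Fin (α i.succ)), s < t →
          ‖z i.succ t - ζ i‖ < ‖z i.succ s - ζ i‖) →
      (∀ (i j : Fin n), i < j → ∀ (s : Fin (α i.succ)) (t : Fin (α j.succ)),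
          ‖(z i.succ s - ζ i) - (z j.succ t - ζ j)‖ < ‖ζ i - ζ j‖) →
      AbsConvTo (fun K : (i : Fin (n+1)) → Fin (α i) → ℤ =>
          B.gr.pair φ
            (compApply (α 0) (fun j => B.gr.ext (fun x =>
                if (j : ℕ) < l₀ then B.YL (u 0 j) x (K 0 j) else B.YsR (u 0 j) x (K 0 j)))
              (Φ (fun i => compApply (α i.succ)
                    (fun s x => A.Y (u i.succ s) x (K i.succ s)) A.vac) ζ))
            * (∏ j, z 0 j ^ (-(K 0 j) - 1))
            * ∏ i : Fin n, ∏ s, (z i.succ s - ζ i) ^ (-(K i.succ s) - 1))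
        (R.eval (fun q => z q.1 q.2))

/-- The set `Ĉ^n_m(V,W)`: maps `V^{⊗n} → W̃_{z₁,…,zₙ}` that are linear, satisfy the
`D`-derivative and `d`-conjugation properties and are composable with `m` vertex
operators. -/
def IsCochain (A : MOSVA V) (B : Bimod A W) (n m : ℕ)
    (Φ : (Fin n → V) → (Fin n → ℂ) → B.gr.Comp) : Prop :=
  IsMultilinear Φ ∧ (∀ v, B.gr.WTilde (Φ v)) ∧ DDerivProp A B Φ ∧ DConjProp A B Φ ∧
    ComposableWith A B n m Φ

/-- `Ψ` represents `E_W^{(1,0)} ∘₂ Φ`, i.e. the map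
`v ↦ E(Y_W^L(v 0, z 0) Φ(v 1 ⊗ ⋯ ⊗ v n)(z 1,…,z n))`. -/
def RepLeft (A : MOSVA V) (B : Bimod A W) {n : ℕ}
    (Φ : (Fin n → V) → (Fin n → ℂ) → B.gr.Comp)
    (Ψ : (Fin (n+1) → V) → (Fin (n+1) → ℂ) → B.gr.Comp) : Prop :=
  (∀ v, B.gr.WTilde (Ψ v)) ∧
  ∀ (v : Fin (n+1) → V) (φ : W →ₗ[ℂ] ℂ), InGradedDual B.gr.proj φ →
    ∀ (z₀ : ℂ) (zt : Fin n → ℂ), Conf (Fin.cons z₀ zt) →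
      (∀ i, ‖zt i‖ < ‖z₀‖) → (∀ i, 0 < ‖zt i‖) →
      AbsConvTo (fun k : ℤ =>
          B.gr.pair φ (B.gr.ext (fun x => B.YL (v 0) x k) (Φ (Fin.tail v) zt))
            * z₀ ^ (-k - 1))
        (B.gr.pair φ (Ψ v (Fin.cons z₀ zt)))

/-- `Ψ` represents `E_W^{(0,1)} ∘₂ Φ`, i.e. the map
`v ↦ E(Y_W^{s(R)}(v (n+1), z (n+1)) Φ(v 1 ⊗ ⋯ ⊗ v n)(z 1,…,z n))`. -/
def RepRight (A : MOSVA V) (B : Bimod A W) {n : ℕ}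
    (Φ : (Fin n → V) → (Fin n → ℂ) → B.gr.Comp)
    (Ψ : (Fin (n+1) → V) → (Fin (n+1) → ℂ) → B.gr.Comp) : Prop :=
  (∀ v, B.gr.WTilde (Ψ v)) ∧
  ∀ (v : Fin (n+1) → V) (φ : W →ₗ[ℂ] ℂ), InGradedDual B.gr.proj φ →
    ∀ (zl : ℂ) (zi : Fin n → ℂ), Conf (Fin.snoc zi zl) →
      (∀ i, ‖zi i‖ < ‖zl‖) → (∀ i, 0 < ‖zi i‖) →
      AbsConvTo (fun k : ℤ =>
          B.gr.pair φ (B.gr.ext (fun x => B.YsR (v (Fin.last n)) x k) (Φ (Fin.init v) zi))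
            * zl ^ (-k - 1))
        (B.gr.pair φ (Ψ v (Fin.snoc zi zl)))

/-- Replace the two adjacent entries `i, i+1` of an `(n+1)`-tuple by a single entry. -/
def mergeAt {M : Type*} {n : ℕ} (i : Fin n) (v : Fin (n+1) → M) (a : M) : Fin n → M :=
  fun j => if j < i then v j.castSucc else if j = i then a else v j.succ

/-- `Ψ` represents `Φ ∘ᵢ E_V^{(2)}`, i.e. the map
`v ↦ E(Φ(v 1 ⊗ ⋯ ⊗ Y_V(v i, z i − ζ)Y_V(v (i+1), z (i+1) − ζ)𝟏 ⊗ ⋯ ⊗ v (n+1))(…,ζ,…))`. -/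
def RepCirc (A : MOSVA V) (B : Bimod A W) {n : ℕ} (i : Fin n)
    (Φ : (Fin n → V) → (Fin n → ℂ) → B.gr.Comp)
    (Ψ : (Fin (n+1) → V) → (Fin (n+1) → ℂ) → B.gr.Comp) : Prop :=
  (∀ v, B.gr.WTilde (Ψ v)) ∧
  ∀ (v : Fin (n+1) → V) (φ : W →ₗ[ℂ] ℂ), InGradedDual B.gr.proj φ →
    ∀ (z : Fin (n+1) → ℂ) (ζ : ℂ), Conf z → Conf (mergeAt i z ζ) →
      ‖z i.succ - ζ‖ < ‖z i.castSucc - ζ‖ → 0 < ‖z i.succ - ζ‖ →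
      (∀ j : Fin (n+1), j ≠ i.castSucc → j ≠ i.succ →
        ‖z i.castSucc - ζ‖ < ‖z j - z i.castSucc‖ ∧ ‖z i.succ - ζ‖ < ‖z j - z i.succ‖) →
      AbsConvTo (fun k : ℤ × ℤ =>
          B.gr.pair φ
            (Φ (mergeAt i v (A.Y (v i.castSucc) (A.Y (v i.succ) A.vac k.2) k.1))
              (mergeAt i z ζ))
            * (z i.castSucc - ζ) ^ (-k.1 - 1) * (z i.succ - ζ) ^ (-k.2 - 1))
        (B.gr.pair φ (Ψ v z))

/-- `Ψ` represents the coboundary `δ̂Φ = E_W^{(1,0)}∘₂Φ + Σᵢ (−1)^i Φ∘ᵢE_V^{(2)}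
+ (−1)^{n+1} E_W^{(0,1)}∘₂Φ` of the `n`-cochain `Φ`. -/
def IsDelta (A : MOSVA V) (B : Bimod A W) {n : ℕ}
    (Φ : (Fin n → V) → (Fin n → ℂ) → B.gr.Comp)
    (Ψ : (Fin (n+1) → V) → (Fin (n+1) → ℂ) → B.gr.Comp) : Prop :=
  ∃ (gL gR : (Fin (n+1) → V) → (Fin (n+1) → ℂ) → B.gr.Comp)
    (gC : Fin n → (Fin (n+1) → V) → (Fin (n+1) → ℂ) → B.gr.Comp),
    RepLeft A B Φ gL ∧ RepRight A B Φ gR ∧ (∀ i, RepCirc A B i Φ (gC i)) ∧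
    ∀ v z, Ψ v z = gL v z + (∑ i : Fin n, ((-1 : ℂ) ^ ((i : ℕ) + 1)) • gC i v z)
      + ((-1 : ℂ) ^ (n + 1)) • gR v z

end Cochains


/-!
For fixed `z ∈ F_nℂ` the prefactor `P = ∏ (z i - z j) ^ p i j` is a nonzero number, so
`⟨w', f z⟩ = P⁻¹ ∑ₖ ⟨w', b k⟩ zᵏ`. Since `b k` is homogeneous of weight `C + k₁ + ⋯ + kₙ`
and only finitely many `k` have a given total degree, collecting the terms `P⁻¹ zᵏ b k` by
weight gives a finite sum in each weight: an element of `∏ₘ W_[m]` whose pairing with every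
`w' ∈ W'` is this (finite) sum.
-/

section Completion

variable {W : Type*} [AddCommGroup W] [Module ℂ W] (G : CGrading W)

def CGrading.sumHomogeneous {κ : Type*} (c : κ → W) (wt : κ → ℂ)
    (hc : ∀ k, G.proj (wt k) (c k) = c k) (hfin : ∀ m, (wt ⁻¹' {m}).Finite) : G.Comp :=
  ⟨fun m => ∑ k ∈ (hfin m).toFinset, c k, fun m => by
    rw [map_sum]
    refine Finset.sum_congr rfl fun k hk => ?_
    rw [Set.Finite.mem_toFinset, Set.mem_preimage, Set.mem_singleton_iff] at hk
    rw [← hk, hc]⟩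

theorem CGrading.pair_sumHomogeneous {κ : Type*} (c : κ → W) (wt : κ → ℂ)
    (hc : ∀ k, G.proj (wt k) (c k) = c k) (hfin : ∀ m, (wt ⁻¹' {m}).Finite)
    (φ : W →ₗ[ℂ] ℂ) (hφ : (Function.support fun k => φ (c k)).Finite) :
    G.pair φ (G.sumHomogeneous c wt hc hfin) = ∑ᶠ k, φ (c k) := by
  set T := hφ.toFinset
  have hfiber : ∀ m, ∑ k ∈ (hfin m).toFinset, φ (c k) =
      ∑ k ∈ T, if wt k = m then φ (c k) else 0 := by
    intro m
    rw [← Finset.sum_filter]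
    refine (Finset.sum_subset (fun k hk => ?_) fun k hk hkT => ?_).symm
    · simpa using (Finset.mem_filter.1 hk).2
    · simp only [Finset.mem_filter, not_and] at hkT
      by_contra hk0
      rw [Set.Finite.mem_toFinset, Set.mem_preimage, Set.mem_singleton_iff] at hk
      exact hkT (hφ.mem_toFinset.2 hk0) hk
  simp only [CGrading.pair, CGrading.sumHomogeneous, map_sum, hfiber]
  rw [finsum_sum_comm, finsum_eq_sum_of_support_subset _ (s := T) (by simp [T])]
  · refine Finset.sum_congr rfl fun k _ =>
      (finsum_eq_single _ (wt k) fun m hm => if_neg (Ne.symm hm)).trans (if_pos rfl)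
  · intro k _
    exact (Set.finite_singleton (wt k)).subset fun m => by simp +contextual [eq_comm]

end Completion

theorem finite_preimage_sum_eq (n N : ℕ) :
    ((fun k : Fin n → ℕ => ∑ i, k i) ⁻¹' {N}).Finite :=
  (Finset.Nat.antidiagonalTuple n N).finite_toSet.subset fun _ hk =>
    Finset.Nat.mem_antidiagonalTuple.2 hk

theorem finite_preimage_add_sum_eq (n : ℕ) (C m : ℂ) :
    ((fun k : Fin n → ℕ => C + ∑ i, (k i : ℂ)) ⁻¹' {m}).Finite := by
  have hinj : Function.Injective fun N : ℕ => C + N :=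
    (add_right_injective C).comp Nat.cast_injective
  have hdeg : ((fun N : ℕ => C + N) ⁻¹' {m}).Finite :=
    (Set.finite_singleton m).preimage hinj.injOn
  convert hdeg.preimage' fun N _ => finite_preimage_sum_eq n N using 1
  ext k
  simp

theorem prod_offDiag_zpow_sub_ne_zero {ι : Type*} [Fintype ι] [DecidableEq ι] {z : ι → ℂ}
    (hz : Conf z) (p : ι → ι → ℤ) :
    ∏ q ∈ Finset.univ.offDiag, (z q.1 - z q.2) ^ (p q.1 q.2) ≠ 0 :=
  Finset.prod_ne_zero_iff.mpr fun q hq =>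
    zpow_ne_zero _ (sub_ne_zero.mpr (hz q.1 q.2 (Finset.mem_offDiag.mp hq).2.2))

theorem statement2_general {W : Type*} [AddCommGroup W] [Module ℂ W] (G : CGrading W)
    (n : ℕ) (f : (Fin n → ℂ) → (W →ₗ[ℂ] ℂ) → ℂ)
    (p : Fin n → Fin n → ℤ) (b : (Fin n → ℕ) → W)
    (hpoly : ∀ φ : W →ₗ[ℂ] ℂ, InGradedDual G.proj φ →
      (Function.support fun k => φ (b k)).Finite ∧
      ∀ z : Fin n → ℂ, Conf z →
        (∏ q ∈ Finset.univ.offDiag, (z q.1 - z q.2) ^ (p q.1 q.2)) * f z φ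
          = ∑ᶠ k : Fin n → ℕ, φ (b k) * ∏ i, z i ^ (k i))
    (C : ℂ) (hhom : ∀ k : Fin n → ℕ, G.proj (C + ∑ i, (k i : ℂ)) (b k) = b k) :
    ∀ z : Fin n → ℂ, Conf z → ∃ wb : G.Comp, ∀ φ : W →ₗ[ℂ] ℂ,
      InGradedDual G.proj φ → f z φ = G.pair φ wb := by
  intro z hz
  set P := ∏ q ∈ Finset.univ.offDiag, (z q.1 - z q.2) ^ (p q.1 q.2)
  have hP : P ≠ 0 := prod_offDiag_zpow_sub_ne_zero hz p
  let c : (Fin n → ℕ) → W := fun k => (P⁻¹ * ∏ i, z i ^ (k i)) • b k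
  have hc : ∀ k, G.proj (C + ∑ i, (k i : ℂ)) (c k) = c k := fun k => by
    simp only [c, map_smul, hhom]
  refine ⟨G.sumHomogeneous c _ hc (finite_preimage_add_sum_eq n C), fun φ hφ => ?_⟩
  obtain ⟨hfin, hexp⟩ := hpoly φ hφ
  have hφc : ∀ k, φ (c k) = P⁻¹ * (φ (b k) * ∏ i, z i ^ (k i)) := fun k => by
    simp only [c, map_smul, smul_eq_mul]
    ring
  rw [G.pair_sumHomogeneous _ _ _ _ _ (hfin.subset fun k => by simp +contextual [hφc]),
    finsum_congr hφc, ← mul_finsum, ← hexp z hz, inv_mul_cancel_left₀ hP]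

/-- Let `W` be a `ℂ`-graded space with graded dual `W'` and
algebraic completion `W̄`, and let `f : F_nℂ → (W')*` satisfy: (i) all its pairings
with graded-dual functionals are rational functions with only diagonal poles;
(ii) there are integers `p i j` and a formal series `g ∈ W[[x₁,…,xₙ]]` (with
coefficients `b`) such that `∏ (z i − z j)^(p i j) ⟨w', f z⟩ = ⟨w', g(z)⟩` as
polynomial functions. If moreover there is `C : ℂ` such that every coefficient
`b k` is homogeneous of weight `C + k₁ + ⋯ + kₙ`, then `f` takes values in `W̄`. -/
theorem statement2 {W : Type*} [AddCommGroup W] [Module ℂ W] (G : CGrading W)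
    (n : ℕ) (f : (Fin n → ℂ) → (W →ₗ[ℂ] ℂ) → ℂ)
    (hadd : ∀ (z : Fin n → ℂ) (φ ψ : W →ₗ[ℂ] ℂ), InGradedDual G.proj φ →
      InGradedDual G.proj ψ → f z (φ + ψ) = f z φ + f z ψ)
    (hsmul : ∀ (z : Fin n → ℂ) (c : ℂ) (φ : W →ₗ[ℂ] ℂ), InGradedDual G.proj φ →
      f z (c • φ) = c * f z φ)
    (hrat : ∀ φ : W →ₗ[ℂ] ℂ, InGradedDual G.proj φ →
      ∃ R : DiagRatFn (Fin n), ∀ z : Fin n → ℂ, Conf z → f z φ = R.eval z)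
    (p : Fin n → Fin n → ℤ) (b : (Fin n → ℕ) → W)
    (hpoly : ∀ φ : W →ₗ[ℂ] ℂ, InGradedDual G.proj φ →
      (Function.support fun k => φ (b k)).Finite ∧
      ∀ z : Fin n → ℂ, Conf z →
        (∏ q ∈ Finset.univ.offDiag, (z q.1 - z q.2) ^ (p q.1 q.2)) * f z φ
          = ∑ᶠ k : Fin n → ℕ, φ (b k) * ∏ i, z i ^ (k i))
    (C : ℂ) (hhom : ∀ k : Fin n → ℕ, G.proj (C + ∑ i, (k i : ℂ)) (b k) = b k) :
    ∀ z : Fin n → ℂ, Conf z → ∃ wb : G.Comp, ∀ φ : W →ₗ[ℂ] ℂ,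
      InGradedDual G.proj φ → f z φ = G.pair φ wb :=
  statement2_general G n f p b hpoly C hhom

end VA
end
end

section
/- Let V be a MOSVA and W a V-bimodule, and let Φ : V^{⊗n} → W̃_{z_1,…,z_n} be a linear map satisfying the D-derivative property. Then: (1) for all v_1,…,v_n ∈ V, w' ∈ W', (z_1,…,z_n) ∈ F_nℂ, z ∈ ℂ and 1 ≤ i ≤ n with (z_1,…,z_{i−1},z_i+z,z_{i+1},…,z_n) ∈ F_nℂ, the power series expansion of ⟨w', Φ(v_1⊗⋯⊗v_n)(z_1,…,z_{i−1},z_i+z,z_{i+1},…,z_n)⟩ in positive powers of z equals the power series ⟨w', Φ(v_1⊗⋯⊗v_{i−1}⊗e^{zD_V}v_i⊗v_{i+1}⊗⋯⊗v_n)(z_1,…,z_n)⟩, which converges absolutely when |z| < min_{1≤i<j≤n}|z_i−z_j|; and (2) for all such data with (z_1+z,…,z_n+z) ∈ F_nℂ, the power series expansion of ⟨w', Φ(v_1⊗⋯⊗v_n)(z_1+z,…,z_n+z)⟩ in positive powers of z equals the power series ⟨w', e^{zD_W}Φ(v_1⊗⋯⊗v_n)(z_1,…,z_n)⟩, which converges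 absolutely when |z| < min_{1≤i≤n}|z_i|. -/
set_option autoImplicit false
set_option maxHeartbeats 1000000

open scoped BigOperators

noncomputable section

namespace VA

/-!
Each pairing `⟨w', Φ(v)(z)⟩` is a rational function whose poles lie on the diagonals, hence
holomorphic on the configuration space. Moving only `z_i`, the `D`-derivative property says
that the `m`-th derivative is the pairing with `D_V^m v_i` in the `i`-th slot. Translating all
`z_j` together, the chain rule sums the `n` partial derivatives, which is the pairing with
`D_W Φ(v)(z)`; since `D_W` raises weights by one it transposes to the graded dual, so the
`m`-th derivative is the pairing with `D_W^m Φ(v)(z)`. Both series are therefore Taylor series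
of holomorphic functions, absolutely convergent on every disc of holomorphy; in (2) that disc
is the whole plane, since a common translation never meets a diagonal.
-/

section Taylor

open Metric

theorem summable_norm_taylorSeries_on_ball {f : ℂ → ℂ} {c : ℂ} {r : ℝ}
    (hf : DifferentiableOn ℂ f (ball c r)) {z : ℂ} (hz : z ∈ ball c r) :
    Summable fun m : ℕ => ‖((m.factorial : ℂ))⁻¹ * iteratedDeriv m f c * (z - c) ^ m‖ := by
  obtain ⟨R, hzR, hRr⟩ := exists_between (mem_ball_iff_norm.mp hz)
  have hR : 0 < R := (norm_nonneg _).trans_lt hzR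
  have hsub : closedBall c R ⊆ ball c r := closedBall_subset_ball hRr
  obtain ⟨C, hC⟩ := (isCompact_sphere c R).exists_bound_of_continuousOn
    (hf.continuousOn.mono (sphere_subset_closedBall.trans hsub))
  have hq : ‖z - c‖ / R < 1 := (div_lt_one hR).mpr hzR
  refine Summable.of_nonneg_of_le (fun _ => norm_nonneg _) (fun m => ?_)
    ((summable_geometric_of_lt_one (by positivity) hq).mul_left C)
  calc ‖((m.factorial : ℂ))⁻¹ * iteratedDeriv m f c * (z - c) ^ m‖
      = (m.factorial : ℝ)⁻¹ * ‖iteratedDeriv m f c‖ * ‖z - c‖ ^ m := by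
        simp [norm_pow]
    _ ≤ (m.factorial : ℝ)⁻¹ * (m.factorial * C / R ^ m) * ‖z - c‖ ^ m := by
        gcongr
        exact Complex.norm_iteratedDeriv_le_of_forall_mem_sphere_norm_le m hR
          (hf.diffContOnCl_ball hsub) hC
    _ = C * (‖z - c‖ / R) ^ m := by
        rw [div_pow]
        field_simp

theorem absConvTo_taylorSeries_on_ball {f : ℂ → ℂ} {c : ℂ} {r : ℝ}
    (hf : DifferentiableOn ℂ f (ball c r)) {z : ℂ} (hz : z ∈ ball c r) :
    AbsConvTo (fun m : ℕ => ((m.factorial : ℂ))⁻¹ * iteratedDeriv m f c * (z - c) ^ m)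
      (f z) :=
  ⟨summable_norm_taylorSeries_on_ball hf hz,
    (Complex.hasSum_taylorSeries_on_ball hf hz).congr_fun fun m => by
      simp only [smul_eq_mul]
      ring⟩

theorem iteratedDeriv_eqOn_of_hasDerivAt {𝕜 E : Type*} [NontriviallyNormedField 𝕜]
    [NormedAddCommGroup E] [NormedSpace 𝕜 E] {h : ℕ → 𝕜 → E} {U : Set 𝕜} (hU : IsOpen U)
    (hder : ∀ m, ∀ s ∈ U, HasDerivAt (h m) (h (m + 1) s) s) (m : ℕ) :
    Set.EqOn (iteratedDeriv m (h 0)) (h m) U := by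
  induction m with
  | zero => exact fun s _ => congrFun iteratedDeriv_zero s
  | succ m ih =>
    intro s hs
    rw [iteratedDeriv_succ, (Filter.eventuallyEq_of_mem (hU.mem_nhds hs) ih).deriv_eq,
      (hder m s hs).deriv]

theorem absConvTo_of_hasDerivAt_succ {h : ℕ → ℂ → ℂ} {U : Set ℂ} (hU : IsOpen U)
    (hder : ∀ m, ∀ s ∈ U, HasDerivAt (h m) (h (m + 1) s) s) {c t : ℂ}
    (ht : closedBall c ‖t‖ ⊆ U) :
    AbsConvTo (fun m : ℕ => ((m.factorial : ℂ))⁻¹ * h m c * t ^ m) (h 0 (c + t)) := by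
  obtain ⟨δ, hδ, hδU⟩ := (isCompact_closedBall c ‖t‖).exists_thickening_subset_open hU ht
  rw [thickening_closedBall hδ (norm_nonneg t)] at hδU
  have hdiff : DifferentiableOn ℂ (h 0) (ball c (δ + ‖t‖)) := fun s hs =>
    (hder 0 s (hδU hs)).differentiableAt.differentiableWithinAt
  have hct : c + t ∈ ball c (δ + ‖t‖) := by
    rw [mem_ball_iff_norm, add_sub_cancel_left]
    linarith
  have hc : c ∈ U := ht (mem_closedBall_self (norm_nonneg t))
  have key := absConvTo_taylorSeries_on_ball hdiff hct
  rw [add_sub_cancel_left] at key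
  simpa only [iteratedDeriv_eqOn_of_hasDerivAt hU hder _ hc] using key

end Taylor

theorem isOpen_setOf_conf {ι : Type*} [Finite ι] : IsOpen {w : ι → ℂ | Conf w} := by
  simp only [Conf, Set.ofPred_forall]
  exact isOpen_iInter_of_finite fun p => isOpen_iInter_of_finite fun q =>
    isOpen_iInter_of_finite fun _ => isOpen_ne_fun (continuous_apply p) (continuous_apply q)

theorem Conf.update {ι : Type*} [DecidableEq ι] {z : ι → ℂ} (hz : Conf z) {i : ι} {s : ℂ}
    (hs : ∀ j, j ≠ i → ‖s - z i‖ < ‖z j - z i‖) : Conf (Function.update z i s) := by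
  have hne : ∀ j, j ≠ i → s ≠ z j := fun j hj hsj => by
    simpa [hsj] using hs j hj
  intro p q hpq
  rcases eq_or_ne p i with rfl | hp
  · simpa [Function.update_of_ne hpq.symm] using hne q hpq.symm
  rcases eq_or_ne q i with rfl | hq
  · simpa [Function.update_of_ne hpq] using (hne p hpq).symm
  simpa [Function.update_of_ne hp, Function.update_of_ne hq] using hz p q hpq

theorem DiagRatFn.differentiableAt_eval {ι : Type*} [Fintype ι] [DecidableEq ι]
    (R : DiagRatFn ι) {z : ι → ℂ} (hz : Conf z) : DifferentiableAt ℂ R.eval z := by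
  have hden : ∏ q ∈ Finset.univ.offDiag, (z q.1 - z q.2) ^ R.b q.1 q.2 ≠ 0 :=
    Finset.prod_ne_zero_iff.mpr fun q hq =>
      pow_ne_zero _ (sub_ne_zero.mpr (hz q.1 q.2 (Finset.mem_offDiag.mp hq).2.2))
  have hnum : DifferentiableAt ℂ (fun w : ι → ℂ => MvPolynomial.eval w R.num) z :=
    (AnalyticOnNhd.eval_mvPolynomial R.num z trivial).differentiableAt
  have hdiff : DifferentiableAt ℂ
      (fun w : ι → ℂ => ∏ q ∈ Finset.univ.offDiag, (w q.1 - w q.2) ^ R.b q.1 q.2) z := by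
    fun_prop
  exact (hnum.mul (hdiff.inv hden)).congr_of_eventuallyEq
    (Filter.Eventually.of_forall fun w => div_eq_mul_inv _ _)

theorem hasDerivAt_comp_add_const_of_partials {𝕜 E ι : Type*} [NontriviallyNormedField 𝕜]
    [NormedAddCommGroup E] [NormedSpace 𝕜 E] [Fintype ι] [DecidableEq ι]
    {G : (ι → 𝕜) → E} {z : ι → 𝕜} {s : 𝕜} {g : ι → E}
    (hG : DifferentiableAt 𝕜 G (fun j => z j + s))
    (hpartial : ∀ j, HasDerivAt (fun t => G (Function.update (fun j => z j + s) j t))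
      (g j) (z j + s)) :
    HasDerivAt (fun s' => G (fun j => z j + s')) (∑ j, g j) s := by
  set w : ι → 𝕜 := fun j => z j + s
  have hpartial' : ∀ j, fderiv 𝕜 G w (Pi.single j 1) = g j := fun j => by
    have hG' : HasFDerivAt G (fderiv 𝕜 G w) (Function.update w j (w j)) := by
      rw [Function.update_eq_self]
      exact hG.hasFDerivAt
    exact (hG'.comp_hasDerivAt (w j) (hasDerivAt_update w j (w j))).unique (hpartial j)
  have hpath : HasDerivAt (fun s' : 𝕜 => fun j => z j + s') (fun _ => 1) s :=
    hasDerivAt_pi.mpr fun j => (hasDerivAt_id s).const_add (z j)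
  have hsum : (fun _ : ι => (1 : 𝕜)) = ∑ j, Pi.single j 1 :=
    (Finset.univ_sum_single _).symm
  have := hG.hasFDerivAt.comp_hasDerivAt s hpath
  rwa [hsum, map_sum, Finset.sum_congr rfl fun j _ => hpartial' j] at this

section Graded

variable {W : Type*} [AddCommGroup W] [Module ℂ W] {G : CGrading W}

namespace CGrading

def IsHomogeneous (G : CGrading W) (a : ℂ) (T : W →ₗ[ℂ] W) : Prop :=
  ∀ n, T ∘ₗ G.proj n = G.proj (n + a) ∘ₗ T ∘ₗ G.proj n

theorem proj_proj (n : ℂ) (w : W) : G.proj n (G.proj n w) = G.proj n w := by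
  simpa using LinearMap.congr_fun (G.proj_comp n n) w

theorem isHomogeneous_one : G.IsHomogeneous 0 1 := fun n => by
  ext w
  simp [proj_proj]

theorem IsHomogeneous.comp {a b : ℂ} {S T : W →ₗ[ℂ] W} (hS : G.IsHomogeneous b S)
    (hT : G.IsHomogeneous a T) : G.IsHomogeneous (a + b) (S ∘ₗ T) := fun n => by
  ext w
  have hTw := LinearMap.congr_fun (hT n) w
  have hSw := LinearMap.congr_fun (hS (n + a)) (T (G.proj n w))
  simp only [LinearMap.comp_apply] at hTw hSw ⊢
  rw [← hTw] at hSw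
  simpa only [add_assoc] using hSw

theorem IsHomogeneous.pow {a : ℂ} {T : W →ₗ[ℂ] W} (hT : G.IsHomogeneous a T) (m : ℕ) :
    G.IsHomogeneous (m * a) (T ^ m) := by
  induction m with
  | zero => simpa using isHomogeneous_one
  | succ m ih =>
    rw [pow_succ', Module.End.mul_eq_comp, Nat.cast_succ, add_one_mul]
    exact hT.comp ih

variable {a : ℂ} {T : W →ₗ[ℂ] W}

theorem IsHomogeneous.ext_apply (hT : G.IsHomogeneous a T) (f : G.Comp) (m : ℂ) :
    (G.ext T f).1 m = T (f.1 (m - a)) := by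
  have hterm : ∀ n, G.proj m (T (f.1 n)) = if n = m - a then T (f.1 n) else 0 := by
    intro n
    have hTn : T (f.1 n) = G.proj (n + a) (T (f.1 n)) := by
      simpa [f.2 n] using LinearMap.congr_fun (hT n) (f.1 n)
    rw [hTn, ← LinearMap.comp_apply (G.proj m), G.proj_comp]
    by_cases hn : n = m - a
    · rw [if_pos (by rw [hn]; ring), if_pos hn]
    · rw [if_neg (fun h => hn (by rw [h]; ring)), if_neg hn, LinearMap.zero_apply]
  show ∑ᶠ n, G.proj m (T (f.1 n)) = _
  rw [finsum_congr hterm, finsum_eq_single _ (m - a) fun n hn => if_neg hn, if_pos rfl]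

theorem IsHomogeneous.pair_ext (hT : G.IsHomogeneous a T) (φ : W →ₗ[ℂ] ℂ) (f : G.Comp) :
    G.pair φ (G.ext T f) = G.pair (φ ∘ₗ T) f := by
  simp only [CGrading.pair, hT.ext_apply, LinearMap.comp_apply]
  exact finsum_comp_equiv (Equiv.subRight a) (f := fun n => φ (T (f.1 n)))

theorem IsHomogeneous.inGradedDual_comp (hT : G.IsHomogeneous a T) {φ : W →ₗ[ℂ] ℂ}
    (hφ : InGradedDual G.proj φ) : InGradedDual G.proj (φ ∘ₗ T) := by
  refine (hφ.preimage (add_left_injective a).injOn).subset fun n hn => ?_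
  simp only [Set.mem_preimage, Function.mem_support] at hn ⊢
  intro hzero
  apply hn
  rw [LinearMap.comp_assoc, hT n, ← LinearMap.comp_assoc, hzero, LinearMap.zero_comp]

end CGrading

theorem CGrading.WTilde.differentiableAt_pair {ι : Type*} [Fintype ι] [DecidableEq ι]
    {f : (ι → ℂ) → G.Comp} (hf : G.WTilde f) {φ : W →ₗ[ℂ] ℂ} (hφ : InGradedDual G.proj φ)
    {z : ι → ℂ} (hz : Conf z) : DifferentiableAt ℂ (fun w => G.pair φ (f w)) z := by
  obtain ⟨R, hR⟩ := hf.1 φ hφ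
  have hR' : (fun w => G.pair φ (f w)) =ᶠ[nhds z] R.eval :=
    Filter.eventuallyEq_of_mem (isOpen_setOf_conf.mem_nhds hz) hR
  exact hR'.differentiableAt_iff.mpr (R.differentiableAt_eval hz)

end Graded

section Shift

variable {V : Type*} [AddCommGroup V] [Module ℂ V]
variable {W : Type*} [AddCommGroup W] [Module ℂ W] {A : MOSVA V} {B : Bimod A W} {n : ℕ}
  {Φ : (Fin n → V) → (Fin n → ℂ) → B.gr.Comp}

theorem absConvTo_pair_update_add (hD : DDerivProp A B Φ) (v : Fin n → V) (i : Fin n)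
    {φ : W →ₗ[ℂ] ℂ} (hφ : InGradedDual B.gr.proj φ) {z : Fin n → ℂ} (hz : Conf z) {t : ℂ}
    (ht : ∀ p q : Fin n, p ≠ q → ‖t‖ < ‖z p - z q‖) :
    AbsConvTo (fun m : ℕ =>
        ((m.factorial : ℂ))⁻¹ *
          B.gr.pair φ (Φ (Function.update v i ((A.D)^[m] (v i))) z) * t ^ m)
      (B.gr.pair φ (Φ v (Function.update z i (z i + t)))) := by
  set h : ℕ → ℂ → ℂ := fun m s =>
    B.gr.pair φ (Φ (Function.update v i ((A.D)^[m] (v i))) (Function.update z i s))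
  set U : Set ℂ := {s | Conf (Function.update z i s)}
  have hU : IsOpen U :=
    isOpen_setOf_conf.preimage (continuous_const.update i continuous_id)
  have hder : ∀ m, ∀ s ∈ U, HasDerivAt (h m) (h (m + 1) s) s := fun m s hs => by
    simpa [h, Function.iterate_succ_apply'] using
      hD.1 (Function.update v i ((A.D)^[m] (v i))) i φ hφ _ hs
  have hball : Metric.closedBall (z i) ‖t‖ ⊆ U := fun s hs =>
    hz.update fun j hj => (mem_closedBall_iff_norm.mp hs).trans_lt (ht j i hj)
  simpa [h] using absConvTo_of_hasDerivAt_succ hU hder hball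

theorem absConvTo_pair_add_const (hWT : ∀ v, B.gr.WTilde (Φ v)) (hD : DDerivProp A B Φ)
    (v : Fin n → V) {φ : W →ₗ[ℂ] ℂ} (hφ : InGradedDual B.gr.proj φ) {z : Fin n → ℂ}
    (hz : Conf z) (t : ℂ) :
    AbsConvTo (fun m : ℕ =>
        ((m.factorial : ℂ))⁻¹ * B.gr.pair φ (B.gr.ext (⇑(B.DW ^ m)) (Φ v z)) * t ^ m)
      (B.gr.pair φ (Φ v (fun i => z i + t))) := by
  have hDW : B.gr.IsHomogeneous 1 B.DW := B.DW_wt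
  set h : ℕ → ℂ → ℂ := fun m s => B.gr.pair (φ ∘ₗ B.DW ^ m) (Φ v (fun j => z j + s))
  have hconf : ∀ s : ℂ, Conf (fun j => z j + s) := fun s p q hpq hs =>
    hz p q hpq (add_right_cancel hs)
  have hder : ∀ m, ∀ s ∈ Set.univ, HasDerivAt (h m) (h (m + 1) s) s := fun m s _ => by
    have hψ := (hDW.pow m).inGradedDual_comp hφ
    have hsum := hasDerivAt_comp_add_const_of_partials
      ((hWT v).differentiableAt_pair hψ (hconf s)) fun j => hD.1 v j _ hψ _ (hconf s)
    rwa [← hD.2 v _ hψ _ (hconf s), hDW.pair_ext, LinearMap.comp_assoc,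
      ← Module.End.mul_eq_comp, ← pow_succ] at hsum
  have key := absConvTo_of_hasDerivAt_succ isOpen_univ hder (Set.subset_univ _) (c := 0) (t := t)
  simpa [h, (hDW.pow _).pair_ext, Module.End.one_eq_id] using key

end Shift

theorem statement14_general {V : Type*} [AddCommGroup V] [Module ℂ V]
    {W : Type*} [AddCommGroup W] [Module ℂ W]
    (A : MOSVA V) (B : Bimod A W) (n : ℕ)
    (Φ : (Fin n → V) → (Fin n → ℂ) → B.gr.Comp)
    (hWT : ∀ v, B.gr.WTilde (Φ v))
    (hD : DDerivProp A B Φ) :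
    (∀ (v : Fin n → V) (i : Fin n) (φ : W →ₗ[ℂ] ℂ), InGradedDual B.gr.proj φ →
      ∀ z : Fin n → ℂ, Conf z → ∀ t : ℂ,
        (∀ p q : Fin n, p ≠ q → ‖t‖ < ‖z p - z q‖) →
        AbsConvTo (fun m : ℕ =>
            ((m.factorial : ℂ))⁻¹ *
              B.gr.pair φ (Φ (Function.update v i ((A.D)^[m] (v i))) z) * t ^ m)
          (B.gr.pair φ (Φ v (Function.update z i (z i + t))))) ∧
    (∀ (v : Fin n → V) (φ : W →ₗ[ℂ] ℂ), InGradedDual B.gr.proj φ →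
      ∀ z : Fin n → ℂ, Conf z → ∀ t : ℂ, (∀ i, ‖t‖ < ‖z i‖) →
        AbsConvTo (fun m : ℕ =>
            ((m.factorial : ℂ))⁻¹ *
              B.gr.pair φ (B.gr.ext (⇑(B.DW ^ m)) (Φ v z)) * t ^ m)
          (B.gr.pair φ (Φ v (fun i => z i + t)))) :=
  ⟨fun v i _ hφ _ hz _ ht => absConvTo_pair_update_add hD v i hφ hz ht,
    fun v _ hφ _ hz t _ => absConvTo_pair_add_const hWT hD v hφ hz t⟩

/-- Let `V` be a MOSVA, `W` a `V`-bimodule and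
`Φ : V^{⊗n} → W̃_{z₁,…,zₙ}` a linear map with the `D`-derivative property. Then:
(1) for every `i`, `w' ∈ W'` and `(z₁,…,zₙ) ∈ F_nℂ`, the power series
`⟨w', Φ(v₁⊗⋯⊗e^{tD_V}v_i⊗⋯⊗vₙ)(z)⟩ = Σ_m (1/m!)⟨w', Φ(…D_V^m v_i…)(z)⟩ t^m`
converges absolutely for `|t| < min_{p≠q}|z_p − z_q|` to
`⟨w', Φ(v)(z₁,…,z_i + t,…,zₙ)⟩`; and (2) the power series
`⟨w', e^{tD_W}Φ(v)(z)⟩ = Σ_m (1/m!)⟨w', D_W^m Φ(v)(z)⟩ t^m` converges absolutely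
for `|t| < min_i |z_i|` to `⟨w', Φ(v)(z₁+t,…,zₙ+t)⟩`. -/
theorem statement14 {V : Type*} [AddCommGroup V] [Module ℂ V]
    {W : Type*} [AddCommGroup W] [Module ℂ W]
    (A : MOSVA V) (B : Bimod A W) (n : ℕ)
    (Φ : (Fin n → V) → (Fin n → ℂ) → B.gr.Comp)
    (hlin : IsMultilinear Φ) (hWT : ∀ v, B.gr.WTilde (Φ v))
    (hD : DDerivProp A B Φ) :
    (∀ (v : Fin n → V) (i : Fin n) (φ : W →ₗ[ℂ] ℂ), InGradedDual B.gr.proj φ →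
      ∀ z : Fin n → ℂ, Conf z → ∀ t : ℂ,
        (∀ p q : Fin n, p ≠ q → ‖t‖ < ‖z p - z q‖) →
        AbsConvTo (fun m : ℕ =>
            ((m.factorial : ℂ))⁻¹ *
              B.gr.pair φ (Φ (Function.update v i ((A.D)^[m] (v i))) z) * t ^ m)
          (B.gr.pair φ (Φ v (Function.update z i (z i + t))))) ∧
    (∀ (v : Fin n → V) (φ : W →ₗ[ℂ] ℂ), InGradedDual B.gr.proj φ →
      ∀ z : Fin n → ℂ, Conf z → ∀ t : ℂ, (∀ i, ‖t‖ < ‖z i‖) →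
        AbsConvTo (fun m : ℕ =>
            ((m.factorial : ℂ))⁻¹ *
              B.gr.pair φ (B.gr.ext (⇑(B.DW ^ m)) (Φ v z)) * t ^ m)
          (B.gr.pair φ (Φ v (fun i => z i + t)))) :=
  statement14_general A B n Φ hWT hD

end VA
end
end

section
/- Let V be a MOSVA and W a V-bimodule, and let Φ : V^{⊗n} → W̃_{z_1,…,z_n} be a linear map satisfying the D-derivative and d-conjugation properties. Then for all u^{(1)},…,u^{(n)} ∈ V, the series Φ(Y_V(u^{(1)},z^{(1)}−ζ_1)𝟏 ⊗ Y_V(u^{(2)},z^{(2)}−ζ_2)𝟏 ⊗ ⋯ ⊗ Y_V(u^{(n)},z^{(n)}−ζ_n)𝟏)(ζ_1,…,ζ_n) converges absolutely when |ζ_i−ζ_j| > |z^{(i)}−ζ_i| + |z^{(j)}−ζ_j| for all 1 ≤ i < j ≤ n, to Φ(u^{(1)}⊗⋯⊗u^{(n)})(z^{(1)},…,z^{(n)}). -/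
set_option autoImplicit false
set_option maxHeartbeats 1000000

open scoped BigOperators

noncomputable section

section Taylor

open Metric Nat

theorem iteratedDeriv_eq_of_hasDerivAt_succ {f : ℕ → ℂ → ℂ} {s : Set ℂ} (hs : IsOpen s)
    (hf : ∀ k, ∀ t ∈ s, HasDerivAt (f k) (f (k + 1) t) t) (k : ℕ) :
    ∀ t ∈ s, iteratedDeriv k (f 0) t = f k t := by
  induction k with
  | zero => simp
  | succ k ih =>
    intro t ht
    rw [iteratedDeriv_succ, (Filter.eventuallyEq_of_mem (hs.mem_nhds ht) ih).deriv_eq]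
    exact (hf k t ht).deriv

theorem hasSum_taylorSeries_of_hasDerivAt_succ {f : ℕ → ℂ → ℂ} {c w : ℂ} {ρ : ℝ}
    (hw : ‖w‖ < ρ) (hf : ∀ k, ∀ t ∈ closedBall c ρ, HasDerivAt (f k) (f (k + 1) t) t) :
    HasSum (fun k => ((k ! : ℂ)⁻¹ * w ^ k) * f k c) (f 0 (c + w)) := by
  have hball : ∀ k, ∀ t ∈ ball c ρ, HasDerivAt (f k) (f (k + 1) t) t :=
    fun k t ht => hf k t (ball_subset_closedBall ht)
  have hcw : c + w ∈ ball c ρ := by simpa [mem_ball, dist_eq_norm] using hw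
  have hderiv : ∀ k, iteratedDeriv k (f 0) c = f k c := fun k =>
    iteratedDeriv_eq_of_hasDerivAt_succ isOpen_ball hball k c
      (mem_ball_self ((norm_nonneg w).trans_lt hw))
  simpa only [add_sub_cancel_left, smul_eq_mul, hderiv, mul_assoc] using
    Complex.hasSum_taylorSeries_on_ball
      (fun t ht => (hball 0 t ht).differentiableAt.differentiableWithinAt) hcw

theorem norm_le_of_hasDerivAt_succ {f : ℕ → ℂ → ℂ} {c : ℂ} {ρ M : ℝ} (hρ : 0 < ρ)
    (hf : ∀ k, ∀ t ∈ closedBall c ρ, HasDerivAt (f k) (f (k + 1) t) t)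
    (hM : ∀ t ∈ sphere c ρ, ‖f 0 t‖ ≤ M) (k : ℕ) : ‖f k c‖ ≤ k ! * M / ρ ^ k := by
  have hdiff : DiffContOnCl ℂ (f 0) (ball c ρ) := by
    refine DifferentiableOn.diffContOnCl ?_
    rw [closure_ball c hρ.ne']
    exact fun t ht => (hf 0 t ht).differentiableAt.differentiableWithinAt
  rw [← iteratedDeriv_eq_of_hasDerivAt_succ isOpen_ball
    (fun k t ht => hf k t (ball_subset_closedBall ht)) k c (mem_ball_self hρ)]
  exact Complex.norm_iteratedDeriv_le_of_forall_mem_sphere_norm_le k hρ hdiff hM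

theorem exists_radii_of_gap {ι : Type*} [Finite ι] {a : ι → ℝ} {d : ι → ι → ℝ}
    (h : ∀ i j, i ≠ j → a i + a j < d i j) :
    ∃ ρ : ι → ℝ, (∀ i, a i < ρ i) ∧ ∀ i j, i ≠ j → ρ i + ρ j < d i j := by
  have hev : ∀ᶠ δ in nhds (0 : ℝ), ∀ i j, i ≠ j → (a i + δ) + (a j + δ) < d i j := by
    simp only [Filter.eventually_all]
    intro i j hij
    exact ContinuousAt.eventually_lt (by fun_prop) continuousAt_const (by simpa using h i j hij)
  obtain ⟨δ, hδ, hδ0⟩ :=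
    ((hev.filter_mono nhdsWithin_le_nhds).and (self_mem_nhdsWithin (s := Set.Ioi 0))).exists
  exact ⟨fun i => a i + δ, fun i => lt_add_of_pos_right _ hδ0, hδ⟩

def closedPolydisc {ι : Type*} (ζ : ι → ℂ) (ρ : ι → ℝ) : Set (ι → ℂ) :=
  Set.univ.pi fun j => closedBall (ζ j) (ρ j)

theorem cons_mem_closedPolydisc_cons {n : ℕ} {t ζ₀ : ℂ} {z ζ : Fin n → ℂ} {ρ₀ : ℝ}
    {ρ : Fin n → ℝ} :
    (Fin.cons t z : Fin (n + 1) → ℂ) ∈ closedPolydisc (Fin.cons ζ₀ ζ) (Fin.cons ρ₀ ρ) ↔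
      t ∈ closedBall ζ₀ ρ₀ ∧ z ∈ closedPolydisc ζ ρ := by
  simp only [closedPolydisc, Set.mem_univ_pi, Fin.forall_fin_succ, Fin.cons_zero, Fin.cons_succ]

theorem add_mem_closedPolydisc {ι : Type*} {ζ w : ι → ℂ} {ρ : ι → ℝ} (hw : ∀ j, ‖w j‖ ≤ ρ j) :
    ζ + w ∈ closedPolydisc ζ ρ :=
  Set.mem_univ_pi.2 fun j => by simpa [dist_eq_norm] using hw j

def taylorMonomial {ι : Type*} [Fintype ι] (w : ι → ℂ) (m : ι → ℕ) : ℂ :=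
  ∏ j, ((m j)! : ℂ)⁻¹ * w j ^ m j

theorem Fin.cons_zero_zero {n : ℕ} {α : Type*} [Zero α] :
    (Fin.cons 0 0 : Fin (n + 1) → α) = 0 :=
  Matrix.cons_zero_zero

theorem taylorMonomial_cons {n : ℕ} (a : ℂ) (w : Fin n → ℂ) (k : ℕ) (m : Fin n → ℕ) :
    taylorMonomial (Fin.cons a w : Fin (n + 1) → ℂ) (Fin.cons k m) =
      ((k ! : ℂ)⁻¹ * a ^ k) * taylorMonomial w m := by
  simp [taylorMonomial, Fin.prod_univ_succ]

theorem summable_prod_pow {n : ℕ} {q : Fin n → ℝ} (h0 : ∀ j, 0 ≤ q j) (h1 : ∀ j, q j < 1) :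
    Summable fun m : Fin n → ℕ => ∏ j, q j ^ m j := by
  induction n with
  | zero => exact Summable.of_finite
  | succ n ih =>
    rw [← (Fin.consEquiv fun _ => ℕ).summable_iff]
    have := (summable_geometric_of_lt_one (h0 0) (h1 0)).mul_of_nonneg
      (ih (fun j => h0 j.succ) (fun j => h1 j.succ)) (fun _ => pow_nonneg (h0 0) _)
      (fun _ => Finset.prod_nonneg fun j _ => pow_nonneg (h0 j.succ) _)
    simpa [Function.comp_def, Fin.consEquiv, Fin.prod_univ_succ] using this

theorem hasSum_of_hasSum_cons {n : ℕ} {f : (Fin (n + 1) → ℕ) → ℂ} {g : ℕ → ℂ} {s : ℂ}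
    (hf : Summable fun m => ‖f m‖) (hfiber : ∀ k, HasSum (fun m => f (Fin.cons k m)) (g k))
    (hg : HasSum g s) : HasSum f s := by
  rw [← (Fin.consEquiv fun _ => ℕ).hasSum_iff]
  have hsum := (hf.of_norm.comp_injective (Fin.consEquiv fun _ => ℕ).injective).hasSum
  rwa [hg.unique (hsum.prod_fiberwise hfiber)]

def IsPartialDerivTower {n : ℕ} (G : (Fin n → ℕ) → (Fin n → ℂ) → ℂ) (s : Set (Fin n → ℂ)) :
    Prop :=
  ∀ m i, ∀ z ∈ s, HasDerivAt (fun t => G m (Function.update z i t))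
    (G (Function.update m i (m i + 1)) z) (z i)

namespace IsPartialDerivTower

theorem mono {n : ℕ} {G : (Fin n → ℕ) → (Fin n → ℂ) → ℂ} {s t : Set (Fin n → ℂ)}
    (h : IsPartialDerivTower G s) (hts : t ⊆ s) : IsPartialDerivTower G t :=
  fun m i z hz => h m i z (hts hz)

variable {n : ℕ} {G : (Fin (n + 1) → ℕ) → (Fin (n + 1) → ℂ) → ℂ} {ζ₀ t : ℂ} {ζ z : Fin n → ℂ}
  {ρ₀ : ℝ} {ρ : Fin n → ℝ}

theorem hasDerivAt_head (h : IsPartialDerivTower G (closedPolydisc (Fin.cons ζ₀ ζ) (Fin.cons ρ₀ ρ)))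
    (m : Fin n → ℕ) (hz : z ∈ closedPolydisc ζ ρ) (k : ℕ) (ht : t ∈ closedBall ζ₀ ρ₀) :
    HasDerivAt (fun s => G (Fin.cons k m) (Fin.cons s z))
      (G (Fin.cons (k + 1) m) (Fin.cons t z)) t := by
  simpa [Fin.update_cons_zero] using
    h (Fin.cons k m) 0 _ (cons_mem_closedPolydisc_cons.2 ⟨ht, hz⟩)

theorem tail (h : IsPartialDerivTower G (closedPolydisc (Fin.cons ζ₀ ζ) (Fin.cons ρ₀ ρ)))
    (k : ℕ) (ht : t ∈ closedBall ζ₀ ρ₀) :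
    IsPartialDerivTower (fun m z => G (Fin.cons k m) (Fin.cons t z)) (closedPolydisc ζ ρ) :=
  fun m i z hz => by
    simpa [← Fin.cons_update] using
      h (Fin.cons k m) i.succ _ (cons_mem_closedPolydisc_cons.2 ⟨ht, hz⟩)

end IsPartialDerivTower

theorem norm_le_of_isPartialDerivTower {n : ℕ} {G : (Fin n → ℕ) → (Fin n → ℂ) → ℂ}
    {ζ : Fin n → ℂ} {ρ : Fin n → ℝ} {M : ℝ} (hρ : ∀ j, 0 < ρ j)
    (hG : IsPartialDerivTower G (closedPolydisc ζ ρ)) (hM : ∀ z ∈ closedPolydisc ζ ρ, ‖G 0 z‖ ≤ M)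
    (m : Fin n → ℕ) : ‖G m ζ‖ ≤ M * ∏ j, (m j)! / ρ j ^ m j := by
  induction n generalizing M with
  | zero =>
    obtain rfl : m = 0 := Subsingleton.elim _ _
    simpa using hM ζ fun j => j.elim0
  | succ n ih =>
    obtain ⟨ζ₀, ζ, rfl⟩ : ∃ a b, ζ = Fin.cons a b := ⟨_, _, (Fin.cons_self_tail _).symm⟩
    obtain ⟨ρ₀, ρ, rfl⟩ : ∃ a b, ρ = Fin.cons a b := ⟨_, _, (Fin.cons_self_tail _).symm⟩
    obtain ⟨k, m, rfl⟩ : ∃ a b, m = Fin.cons a b := ⟨_, _, (Fin.cons_self_tail _).symm⟩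
    have hζ : ζ ∈ closedPolydisc ζ ρ := fun j _ => mem_closedBall_self (hρ j.succ).le
    have hsphere : ∀ t ∈ sphere ζ₀ ρ₀,
        ‖G (Fin.cons 0 m) (Fin.cons t ζ)‖ ≤ M * ∏ j, (m j)! / ρ j ^ m j := fun t ht =>
      ih (fun j => hρ j.succ) (hG.tail 0 (sphere_subset_closedBall ht)) (fun z hz => by
        rw [Fin.cons_zero_zero]
        exact hM _ (cons_mem_closedPolydisc_cons.2 ⟨sphere_subset_closedBall ht, hz⟩)) m
    have := norm_le_of_hasDerivAt_succ (f := fun k s => G (Fin.cons k m) (Fin.cons s ζ)) (hρ 0)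
      (fun k s hs => hG.hasDerivAt_head m hζ k hs) hsphere k
    rw [Fin.prod_univ_succ]
    simp only [Fin.cons_zero, Fin.cons_succ] at this ⊢
    exact this.trans_eq (by ring)

theorem summable_norm_taylorMonomial_mul {n : ℕ} {G : (Fin n → ℕ) → (Fin n → ℂ) → ℂ}
    {ζ w : Fin n → ℂ} {ρ : Fin n → ℝ} {M : ℝ} (hw : ∀ j, ‖w j‖ < ρ j)
    (hG : IsPartialDerivTower G (closedPolydisc ζ ρ)) (hM : ∀ z ∈ closedPolydisc ζ ρ, ‖G 0 z‖ ≤ M) :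
    Summable fun m => ‖taylorMonomial w m * G m ζ‖ := by
  have hρ : ∀ j, 0 < ρ j := fun j => (norm_nonneg _).trans_lt (hw j)
  have hbound : ∀ m, ‖taylorMonomial w m * G m ζ‖ ≤ M * ∏ j, (‖w j‖ / ρ j) ^ m j := by
    intro m
    rw [norm_mul, taylorMonomial, norm_prod]
    calc (∏ j, ‖((m j)! : ℂ)⁻¹ * w j ^ m j‖) * ‖G m ζ‖
        ≤ (∏ j, ‖((m j)! : ℂ)⁻¹ * w j ^ m j‖) * (M * ∏ j, (m j)! / ρ j ^ m j) := by
          gcongr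
          exact norm_le_of_isPartialDerivTower hρ hG hM m
      _ = M * ∏ j, (‖w j‖ / ρ j) ^ m j := by
          rw [mul_left_comm, ← Finset.prod_mul_distrib]
          congr 1
          refine Finset.prod_congr rfl fun j _ => ?_
          have := (hρ j).ne'
          simp only [norm_mul, norm_inv, RCLike.norm_natCast, norm_pow, div_pow]
          field_simp
  exact Summable.of_nonneg_of_le (fun _ => norm_nonneg _) hbound <| Summable.mul_left M <|
    summable_prod_pow (fun j => div_nonneg (norm_nonneg _) (hρ j).le)
      (fun j => (div_lt_one (hρ j)).2 (hw j))

theorem hasSum_taylorMonomial_mul {n : ℕ} {G : (Fin n → ℕ) → (Fin n → ℂ) → ℂ}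
    {ζ w : Fin n → ℂ} {ρ : Fin n → ℝ} {M : ℝ} (hw : ∀ j, ‖w j‖ < ρ j)
    (hG : IsPartialDerivTower G (closedPolydisc ζ ρ)) (hM : ∀ z ∈ closedPolydisc ζ ρ, ‖G 0 z‖ ≤ M) :
    HasSum (fun m => taylorMonomial w m * G m ζ) (G 0 (ζ + w)) := by
  induction n generalizing M with
  | zero =>
    have h : ∀ m : Fin 0 → ℕ, taylorMonomial w m * G m ζ = G 0 (ζ + w) := fun m => by
      rw [Subsingleton.elim m 0, Subsingleton.elim (ζ + w) ζ]
      simp [taylorMonomial]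
    simp [h]
  | succ n ih =>
    obtain ⟨ζ₀, ζ, rfl⟩ : ∃ a b, ζ = Fin.cons a b := ⟨_, _, (Fin.cons_self_tail _).symm⟩
    obtain ⟨w₀, w, rfl⟩ : ∃ a b, w = Fin.cons a b := ⟨_, _, (Fin.cons_self_tail _).symm⟩
    obtain ⟨ρ₀, ρ, rfl⟩ : ∃ a b, ρ = Fin.cons a b := ⟨_, _, (Fin.cons_self_tail _).symm⟩
    have hw₀ : ‖w₀‖ < ρ₀ := hw 0
    have hw' : ∀ j, ‖w j‖ < ρ j := fun j => hw j.succ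
    have hρ₀ : 0 < ρ₀ := (norm_nonneg _).trans_lt hw₀
    have hζ₀ : ζ₀ ∈ closedBall ζ₀ ρ₀ := mem_closedBall_self hρ₀.le
    have hcauchy : ∀ k, ∀ z ∈ closedPolydisc ζ ρ,
        ‖G (Fin.cons k 0) (Fin.cons ζ₀ z)‖ ≤ k ! * M / ρ₀ ^ k := fun k z hz =>
      norm_le_of_hasDerivAt_succ (f := fun k t => G (Fin.cons k 0) (Fin.cons t z)) hρ₀
        (fun k t ht => hG.hasDerivAt_head 0 hz k ht) (fun t ht => by
          rw [Fin.cons_zero_zero]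
          exact hM _ (cons_mem_closedPolydisc_cons.2 ⟨sphere_subset_closedBall ht, hz⟩)) k
    have hfiber : ∀ k, HasSum (fun m => taylorMonomial (Fin.cons w₀ w) (Fin.cons k m) *
        G (Fin.cons k m) (Fin.cons ζ₀ ζ))
          (((k ! : ℂ)⁻¹ * w₀ ^ k) * G (Fin.cons k 0) (Fin.cons ζ₀ (ζ + w))) := fun k => by
      simpa only [taylorMonomial_cons, mul_assoc] using
        (ih hw' (hG.tail k hζ₀) (hcauchy k)).mul_left ((k ! : ℂ)⁻¹ * w₀ ^ k)
    have hζw : ζ + w ∈ closedPolydisc ζ ρ := add_mem_closedPolydisc fun j => (hw' j).le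
    have houter := hasSum_taylorSeries_of_hasDerivAt_succ hw₀
      (fun k t ht => hG.hasDerivAt_head 0 hζw k ht)
    rw [Fin.cons_zero_zero,
      show Fin.cons (ζ₀ + w₀) (ζ + w) = (Fin.cons ζ₀ ζ + Fin.cons w₀ w : Fin (n + 1) → ℂ) from
        (Matrix.cons_add_cons _ _ _ _).symm] at houter
    exact hasSum_of_hasSum_cons (summable_norm_taylorMonomial_mul hw hG hM) hfiber houter

end Taylor

namespace VA

section

variable {V : Type*} [AddCommGroup V] [Module ℂ V]
variable {W : Type*} [AddCommGroup W] [Module ℂ W]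

theorem conf_of_mem_closedPolydisc {ι : Type*} {ζ z : ι → ℂ} {ρ : ι → ℝ}
    (hρ : ∀ i j, i ≠ j → ρ i + ρ j < ‖ζ i - ζ j‖) (hz : z ∈ closedPolydisc ζ ρ) : Conf z := by
  intro i j hij hzij
  have hi := Metric.mem_closedBall.1 (Set.mem_univ_pi.1 hz i)
  have hj := Metric.mem_closedBall.1 (Set.mem_univ_pi.1 hz j)
  have htri := dist_triangle_left (ζ i) (ζ j) (z i)
  rw [hzij] at hi htri
  linarith [hρ i j hij, dist_eq_norm (ζ i) (ζ j)]

theorem DiagRatFn.continuousOn_eval {ι : Type*} [Fintype ι] [DecidableEq ι] (R : DiagRatFn ι) :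
    ContinuousOn R.eval {z | Conf z} := by
  refine (MvPolynomial.continuous_eval R.num).continuousOn.div (by fun_prop) fun z hz => ?_
  exact Finset.prod_ne_zero_iff.2 fun q hq =>
    pow_ne_zero _ (sub_ne_zero.2 (hz q.1 q.2 (Finset.mem_offDiag.1 hq).2.2))

theorem CGrading.WTilde.exists_bound {G : CGrading W} {ι : Type*} [Fintype ι] [DecidableEq ι]
    {f : (ι → ℂ) → G.Comp} (hf : G.WTilde f) {φ : W →ₗ[ℂ] ℂ} (hφ : InGradedDual G.proj φ)
    {K : Set (ι → ℂ)} (hK : IsCompact K) (hKconf : ∀ z ∈ K, Conf z) :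
    ∃ M, ∀ z ∈ K, ‖G.pair φ (f z)‖ ≤ M := by
  obtain ⟨R, hR⟩ := hf.1 φ hφ
  obtain ⟨M, hM⟩ := hK.exists_bound_of_continuousOn (R.continuousOn_eval.mono hKconf)
  exact ⟨M, fun z hz => hR z (hKconf z hz) ▸ hM z hz⟩

theorem CGrading.pair_smul (G : CGrading W) (φ : W →ₗ[ℂ] ℂ) (c : ℂ) (f : G.Comp) :
    G.pair φ (c • f) = c * G.pair φ f := by
  simp [CGrading.pair, ← smul_eq_mul, smul_finsum]

theorem CGrading.pair_zero (G : CGrading W) (φ : W →ₗ[ℂ] ℂ) : G.pair φ 0 = 0 := by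
  simpa using G.pair_smul φ 0 0

def IsMultilinear.toMultilinearMap {M : Type*} [AddCommGroup M] [Module ℂ M] {n : ℕ}
    {Φ : (Fin n → V) → M} (h : IsMultilinear Φ) : MultilinearMap ℂ (fun _ : Fin n => V) M where
  toFun := Φ
  map_update_add' v i x y := by convert h.1 v i x y
  map_update_smul' v i c x := by convert h.2 v i c x

theorem IsMultilinear.map_smul_univ {M : Type*} [AddCommGroup M] [Module ℂ M] {n : ℕ}
    {Φ : (Fin n → V) → M} (h : IsMultilinear Φ) (c : Fin n → ℂ) (v : Fin n → V) :
    Φ (fun i => c i • v i) = (∏ i, c i) • Φ v :=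
  h.toMultilinearMap.map_smul_univ c v

theorem IsMultilinear.map_coord_zero {M : Type*} [AddCommGroup M] [Module ℂ M] {n : ℕ}
    {Φ : (Fin n → V) → M} (h : IsMultilinear Φ) {v : Fin n → V} (i : Fin n) (hv : v i = 0) :
    Φ v = 0 :=
  h.toMultilinearMap.map_coord_zero i hv

theorem MOSVA.Y_vac_negSucc (A : MOSVA V) (m : ℕ) (u : V) :
    A.Y u A.vac (Int.negSucc m) = (m.factorial : ℂ)⁻¹ • A.D^[m] u := by
  induction m generalizing u with
  | zero => simpa using A.creation_lim u
  | succ m ih =>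
    have h := A.D_deriv u A.vac (Int.negSucc m)
    rw [show Int.negSucc m - 1 = Int.negSucc (m + 1) by omega, Int.cast_negSucc, neg_neg] at h
    have hm : ((m + 1 : ℕ) : ℂ) ≠ 0 := Nat.cast_ne_zero.2 m.succ_ne_zero
    calc A.Y u A.vac (Int.negSucc (m + 1))
        = ((m + 1 : ℕ) : ℂ)⁻¹ • A.Y (A.D u) A.vac (Int.negSucc m) := by
          rw [MOSVA.D, h, smul_smul, inv_mul_cancel₀ hm, one_smul]
      _ = ((m + 1).factorial : ℂ)⁻¹ • A.D^[m + 1] u := by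
          rw [ih, smul_smul, Function.iterate_succ_apply, Nat.factorial_succ, Nat.cast_mul,
            mul_inv]

theorem DDerivProp.isPartialDerivTower {A : MOSVA V} {B : Bimod A W} {n : ℕ}
    {Φ : (Fin n → V) → (Fin n → ℂ) → B.gr.Comp} (hD : DDerivProp A B Φ) (u : Fin n → V)
    {φ : W →ₗ[ℂ] ℂ} (hφ : InGradedDual B.gr.proj φ) :
    IsPartialDerivTower (fun m z => B.gr.pair φ (Φ (fun j => A.D^[m j] (u j)) z)) {z | Conf z} := by
  intro m i z hz
  convert hD.1 (fun j => A.D^[m j] (u j)) i φ hφ z hz using 4 with j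
  rcases eq_or_ne j i with rfl | hj
  · simp [Function.iterate_succ_apply']
  · simp [hj]

theorem absConvTo_of_negSucc {ι : Type*} {f : (ι → ℤ) → ℂ} {s : ℂ}
    (hf : ∀ K : ι → ℤ, (∃ i, 0 ≤ K i) → f K = 0)
    (hsum : Summable fun m : ι → ℕ => ‖f fun i => Int.negSucc (m i)‖)
    (hs : HasSum (fun m : ι → ℕ => f fun i => Int.negSucc (m i)) s) : AbsConvTo f s := by
  set e : (ι → ℕ) → (ι → ℤ) := fun m i => Int.negSucc (m i)
  have he : Function.Injective e := fun m m' h => funext fun i => Int.negSucc.inj (congrFun h i)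
  have hoff : ∀ K ∉ Set.range e, f K = 0 := by
    intro K hK
    refine hf K (not_forall_not.1 fun hneg => hK ?_)
    choose m hm using fun i => Int.eq_negSucc_of_lt_zero (not_le.1 (hneg i))
    exact ⟨m, funext fun i => (hm i).symm⟩
  exact ⟨(he.summable_iff fun K hK => by simp [hoff K hK]).1 hsum, (he.hasSum_iff hoff).1 hs⟩

end

theorem statement15_general {V : Type*} [AddCommGroup V] [Module ℂ V]
    {W : Type*} [AddCommGroup W] [Module ℂ W]
    (A : MOSVA V) (B : Bimod A W) (n : ℕ)
    (Φ : (Fin n → V) → (Fin n → ℂ) → B.gr.Comp)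
    (hlin : IsMultilinear Φ) (hWT : ∀ v, B.gr.WTilde (Φ v))
    (hD : DDerivProp A B Φ) :
    ∀ (u : Fin n → V) (ζ zv : Fin n → ℂ),
      (∀ i j : Fin n, i ≠ j → ‖zv i - ζ i‖ + ‖zv j - ζ j‖ < ‖ζ i - ζ j‖) →
      ∀ φ : W →ₗ[ℂ] ℂ, InGradedDual B.gr.proj φ →
        AbsConvTo (fun K : Fin n → ℤ =>
            B.gr.pair φ (Φ (fun i => A.Y (u i) A.vac (K i)) ζ)
              * ∏ i, (zv i - ζ i) ^ (-(K i) - 1))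
          (B.gr.pair φ (Φ u zv)) := by
  intro u ζ zv hgap φ hφ
  obtain ⟨ρ, hρw, hρ⟩ := exists_radii_of_gap (a := fun i => ‖zv i - ζ i‖) hgap
  have hconf : ∀ z ∈ closedPolydisc ζ ρ, Conf z := fun z hz => conf_of_mem_closedPolydisc hρ hz
  obtain ⟨M, hM⟩ := (hWT u).exists_bound hφ
    (isCompact_univ_pi fun j => isCompact_closedBall _ _) hconf
  have hG := (hD.isPartialDerivTower u hφ).mono hconf
  have hterm : ∀ m : Fin n → ℕ,
      B.gr.pair φ (Φ (fun i => A.Y (u i) A.vac (Int.negSucc (m i))) ζ)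
          * ∏ i, (zv i - ζ i) ^ (-(Int.negSucc (m i)) - 1)
        = taylorMonomial (zv - ζ) m * B.gr.pair φ (Φ (fun j => A.D^[m j] (u j)) ζ) := by
    intro m
    have hexp : ∀ k : ℕ, -(Int.negSucc k) - 1 = k := fun k => by omega
    simp only [MOSVA.Y_vac_negSucc, hlin.map_smul_univ, Pi.smul_apply, B.gr.pair_smul, hexp,
      zpow_natCast, taylorMonomial, Pi.sub_apply, Finset.prod_mul_distrib]
    ring
  refine absConvTo_of_negSucc (fun K ⟨i, hi⟩ => ?_) ?_ ?_
  · rw [hlin.map_coord_zero i (A.creation (u i) (K i) hi), Pi.zero_apply, B.gr.pair_zero,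
      zero_mul]
  · simpa only [hterm] using summable_norm_taylorMonomial_mul (w := zv - ζ) hρw hG hM
  · convert hasSum_taylorMonomial_mul (w := zv - ζ) hρw hG hM using 1
    · exact funext hterm
    · simp

/-- Let `V` be a MOSVA, `W` a `V`-bimodule and
`Φ : V^{⊗n} → W̃_{z₁,…,zₙ}` a linear map with the `D`-derivative and
`d`-conjugation properties. Then for all `u⁽¹⁾,…,u⁽ⁿ⁾ ∈ V` the series
`Φ(Y_V(u⁽¹⁾,z⁽¹⁾−ζ₁)𝟏 ⊗ ⋯ ⊗ Y_V(u⁽ⁿ⁾,z⁽ⁿ⁾−ζₙ)𝟏)(ζ₁,…,ζₙ)` converges absolutely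
when `|ζ_i − ζ_j| > |z⁽ⁱ⁾ − ζ_i| + |z⁽ʲ⁾ − ζ_j|` for all `i ≠ j`, to
`Φ(u⁽¹⁾ ⊗ ⋯ ⊗ u⁽ⁿ⁾)(z⁽¹⁾,…,z⁽ⁿ⁾)`. -/
theorem statement15 {V : Type*} [AddCommGroup V] [Module ℂ V]
    {W : Type*} [AddCommGroup W] [Module ℂ W]
    (A : MOSVA V) (B : Bimod A W) (n : ℕ)
    (Φ : (Fin n → V) → (Fin n → ℂ) → B.gr.Comp)
    (hlin : IsMultilinear Φ) (hWT : ∀ v, B.gr.WTilde (Φ v))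
    (hD : DDerivProp A B Φ) (hd : DConjProp A B Φ) :
    ∀ (u : Fin n → V) (ζ zv : Fin n → ℂ),
      (∀ i j : Fin n, i ≠ j → ‖zv i - ζ i‖ + ‖zv j - ζ j‖ < ‖ζ i - ζ j‖) →
      ∀ φ : W →ₗ[ℂ] ℂ, InGradedDual B.gr.proj φ →
        AbsConvTo (fun K : Fin n → ℤ =>
            B.gr.pair φ (Φ (fun i => A.Y (u i) A.vac (K i)) ζ)
              * ∏ i, (zv i - ζ i) ^ (-(K i) - 1))
          (B.gr.pair φ (Φ u zv)) :=
  statement15_general A B n Φ hlin hWT hD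

end VA
end
end

section
/- Let V be a meromorphic open-string vertex algebra and W a V-bimodule, and let w ∈ W be a vacuum-like vector, i.e., w is homogeneous of weight 0 and D_W w = 0. Then for every v ∈ V, Y_W^L(v,x)w ∈ W[[x]] and Y_W^{s(R)}(v,x)w ∈ W[[x]], i.e., both series contain no negative powers of x. -/
/-! Since `D_W w = 0`, the `D`-commutator formula gives `-(k+1) (Y_W^L)_k(v) w = 0`
whenever `(Y_W^L)_{k+1}(v) w = 0`, so by lower truncation all coefficients with `k ≥ 0`
vanish (downward induction). The `D`-derivative property gives `-(k+1) (Y_W^R)_k(w) v = 0`,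
so `Y_W^R(w, x) v` is constant in `x`; then `e^{xD_W} Y_W^R(w, -x) v` has no negative powers. -/

set_option autoImplicit false
set_option maxHeartbeats 1000000

open scoped BigOperators

noncomputable section

namespace VA

theorem eq_zero_of_le_of_succ_eq_zero {M : Type*} [Zero M] {f : ℤ → M} {a N : ℤ}
    (hN : ∀ k, N ≤ k → f k = 0) (hstep : ∀ k, a ≤ k → f (k + 1) = 0 → f k = 0) :
    ∀ k, a ≤ k → f k = 0 := by
  intro k hk
  refine Int.leInductionDown (m := max N k) (motive := fun n _ => a ≤ n → f n = 0)
    (fun _ => hN _ (le_max_left N k)) (fun n _ ih ha => ?_) k (le_max_right N k) hk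
  exact hstep (n - 1) ha (by rw [sub_add_cancel]; exact ih (by omega))

theorem neg_intCast_add_one_ne_zero {k : ℤ} (hk : k ≠ -1) : -(((k + 1 : ℤ)) : ℂ) ≠ 0 := by
  rw [neg_ne_zero, Int.cast_ne_zero]
  omega

section VacuumLike

variable {V : Type*} [AddCommGroup V] [Module ℂ V]
variable {W : Type*} [AddCommGroup W] [Module ℂ W] {A : MOSVA V} (B : Bimod A W) {w : W}

theorem Bimod.YL_eq_zero_of_DW_eq_zero (hwD : B.DW w = 0) (v : V) {k : ℤ} (hk : 0 ≤ k) :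
    B.YL v w k = 0 := by
  obtain ⟨N, hN⟩ := B.truncL v w
  refine eq_zero_of_le_of_succ_eq_zero hN (fun j hj hsucc => ?_) k hk
  have h := B.D_commL v w (j + 1)
  rw [hsucc, hwD, map_zero, map_zero, Pi.zero_apply, sub_zero, add_sub_cancel_right] at h
  exact (smul_eq_zero.mp h.symm).resolve_left (neg_intCast_add_one_ne_zero (by omega))

theorem Bimod.YR_eq_zero_of_DW_eq_zero (hwD : B.DW w = 0) (v : V) {k : ℤ} (hk : k ≠ -1) :
    B.YR w v k = 0 := by
  have h := B.D_derivR w v (k + 1)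
  rw [hwD, map_zero, LinearMap.zero_apply, Pi.zero_apply, add_sub_cancel_right] at h
  exact (smul_eq_zero.mp h.symm).resolve_left (neg_intCast_add_one_ne_zero hk)

theorem Bimod.YsR_eq_zero_of_DW_eq_zero (hwD : B.DW w = 0) (v : V) {k : ℤ} (hk : 0 ≤ k) :
    B.YsR v w k = 0 := by
  refine (finsum_congr fun m : ℕ => ?_).trans finsum_zero
  rw [B.YR_eq_zero_of_DW_eq_zero hwD v (by omega), map_zero, smul_zero]

end VacuumLike

theorem statement18_general {V : Type*} [AddCommGroup V] [Module ℂ V]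
    {W : Type*} [AddCommGroup W] [Module ℂ W]
    (A : MOSVA V) (B : Bimod A W)
    (w : W) (hwD : B.DW w = 0) :
    ∀ (v : V) (k : ℤ), 0 ≤ k → B.YL v w k = 0 ∧ B.YsR v w k = 0 :=
  fun v _ hk => ⟨B.YL_eq_zero_of_DW_eq_zero hwD v hk, B.YsR_eq_zero_of_DW_eq_zero hwD v hk⟩

/-- Let `V` be a meromorphic open-string vertex algebra, `W` a
`V`-bimodule, and `w ∈ W` a vacuum-like vector (homogeneous of weight `0` with
`D_W w = 0`). Then for every `v ∈ V`, `Y_W^L(v,x)w ∈ W[[x]]` and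
`Y_W^{s(R)}(v,x)w ∈ W[[x]]`, i.e. all the coefficients of negative powers of `x`
(equivalently, the coefficients `(⋅)_k` with `k ≥ 0`) vanish. -/
theorem statement18 {V : Type*} [AddCommGroup V] [Module ℂ V]
    {W : Type*} [AddCommGroup W] [Module ℂ W]
    (A : MOSVA V) (B : Bimod A W)
    (w : W) (hw0 : B.gr.proj 0 w = w) (hwD : B.DW w = 0) :
    ∀ (v : V) (k : ℤ), 0 ≤ k → B.YL v w k = 0 ∧ B.YsR v w k = 0 :=
  statement18_general A B w hwD

end VA
end
end
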